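/- arXiv:2511.09162 — 9 statements merged into one kernel-verified Lean document; each statement's English description precedes it below -/
import Mathlib

section
/- Let σ > 1, and let μ be a probability density on (0,∞). Let I > 0 (market size), f^c > 0 (fixed production cost), f^e > 0 (entry cost), and let Z > 0 be any real number (the market intensity ∫ z^{σ-1} m(z) dz of the post-entry firm distribution). Define the profit function π(z) = (I/σ) · z^{σ-1}/Z − f^c. Suppose the zero-profit condition π(z̄) = 0 holds at some cutoff z̄ > 0, and the free-entry condition ∫₀^∞ max{π(z), 0} μ(z) dz = f^e holds. Then f^e/f^c = ∫_{z̄}^∞ ( (z/z̄)^{σ-1} − 1 ) μ(z) dz. In particular, the equation determining z̄ does not depend on Z, and hence the productivity cutoff is independent of the distribution of incumbent firms whenever entry is strictly positive. -/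
open MeasureTheory

/-- With CES profits `π(z) = (I/σ) z^(σ-1)/Z − f^c`, the zero-profit
condition at the cutoff `z̄` and the free-entry condition jointly imply
`f^e/f^c = ∫_{z̄}^∞ ((z/z̄)^(σ-1) − 1) μ(z) dz`, an equation independent of the
market intensity `Z` and hence of the incumbent distribution. -/
theorem stmt1 (σ : ℝ) (hσ : 1 < σ)
    (μ : ℝ → ℝ) (hμ_nonneg : ∀ z ∈ Set.Ioi (0:ℝ), 0 ≤ μ z)
    (hμ_prob : ∫ z in Set.Ioi (0:ℝ), μ z = 1)
    (I fc fe Z : ℝ) (hI : 0 < I) (hfc : 0 < fc) (hfe : 0 < fe) (hZ : 0 < Z)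
    (prof : ℝ → ℝ) (hprof : ∀ z, prof z = I / σ * z ^ (σ - 1) / Z - fc)
    (zbar : ℝ) (hzbar : 0 < zbar) (hzero : prof zbar = 0)
    (hfree : ∫ z in Set.Ioi (0:ℝ), max (prof z) 0 * μ z = fe) :
    fe / fc = ∫ z in Set.Ioi zbar, ((z / zbar) ^ (σ - 1) - 1) * μ z := by
  have hσ' : (0:ℝ) ≤ σ - 1 := by linarith
  have hzb : (0:ℝ) < zbar ^ (σ - 1) := Real.rpow_pos_of_pos hzbar _
  have hc : I / σ * zbar ^ (σ - 1) / Z = fc := by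
    have := hprof zbar; rw [this] at hzero; linarith
  -- rewrite profit for z ≥ 0
  have hrw : ∀ z : ℝ, 0 ≤ z → prof z = fc * ((z / zbar) ^ (σ - 1) - 1) := by
    intro z hz
    have hdiv : (z / zbar) ^ (σ - 1) = z ^ (σ - 1) / zbar ^ (σ - 1) :=
      Real.div_rpow hz hzbar.le _
    rw [hprof, hdiv]
    field_simp
    have hc' : I * zbar ^ (σ - 1) = fc * (σ * Z) := by
      have hσ0 : (0:ℝ) < σ := by linarith
      field_simp at hc; linarith
    linear_combination z ^ (σ - 1) * hc'
  have key : ∀ z ∈ Set.Ioi (0:ℝ), max (prof z) 0 * μ z =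
      Set.indicator (Set.Ioi zbar) (fun z => fc * (((z / zbar) ^ (σ - 1) - 1) * μ z)) z := by
    intro z hz
    simp only [Set.mem_Ioi] at hz
    by_cases hcase : zbar < z
    · have h1 : 1 ≤ z / zbar := (one_le_div hzbar).mpr hcase.le
      have hge : (1:ℝ) ≤ (z / zbar) ^ (σ - 1) := Real.one_le_rpow h1 hσ'
      have hp : 0 ≤ prof z := by rw [hrw z hz.le]; nlinarith
      rw [Set.indicator_of_mem (show z ∈ Set.Ioi zbar from hcase), max_eq_left hp, hrw z hz.le]; ring
    · push_neg at hcase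
      have h1 : z / zbar ≤ 1 := (div_le_one hzbar).mpr hcase
      have hle : (z / zbar) ^ (σ - 1) ≤ 1 :=
        Real.rpow_le_one (div_nonneg hz.le hzbar.le) h1 hσ'
      have hp : prof z ≤ 0 := by rw [hrw z hz.le]; nlinarith
      rw [Set.indicator_of_notMem (show z ∉ Set.Ioi zbar by simpa using hcase), max_eq_right hp, zero_mul]
  have h2 : fe = fc * ∫ z in Set.Ioi zbar, ((z / zbar) ^ (σ - 1) - 1) * μ z := by
    rw [← hfree, setIntegral_congr_fun measurableSet_Ioi key,
      setIntegral_indicator measurableSet_Ioi, Set.Ioi_inter_Ioi,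
      sup_eq_right.mpr hzbar.le, integral_const_mul]
  rw [h2, mul_comm, mul_div_assoc, div_self hfc.ne', mul_one]
end

section
/- Let σ > 1 and let μ be a probability density on (0,∞) such that ∫₀^∞ z^{σ-1} μ(z) dz < ∞ and ∫_a^∞ μ(z) dz > 0 for every a > 0. Then the function G(u) := ∫_u^∞ ( (z/u)^{σ-1} − 1 ) μ(z) dz is strictly decreasing on (0,∞). Consequently, for every r > 0 the cutoff equation G(z̄) = r has at most one solution z̄ ∈ (0,∞). -/
open MeasureTheory

private lemma stmt2_integrable (σ : ℝ) (hσ : 1 < σ) (μ : ℝ → ℝ)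
    (hμ_int : IntegrableOn μ (Set.Ioi 0))
    (hmom : IntegrableOn (fun z => z ^ (σ - 1) * μ z) (Set.Ioi 0))
    {u : ℝ} (hu : 0 < u) :
    IntegrableOn (fun z => ((z / u) ^ (σ - 1) - 1) * μ z) (Set.Ioi u) := by
  have h0 : IntegrableOn (fun z => (u ^ (σ - 1))⁻¹ * (z ^ (σ - 1) * μ z) - μ z)
      (Set.Ioi 0) := (hmom.const_mul _).sub hμ_int
  have h1 := h0.mono_set (Set.Ioi_subset_Ioi hu.le)
  refine h1.congr_fun (fun z hz => ?_) measurableSet_Ioi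
  have hz0 : (0:ℝ) < z := hu.trans hz
  rw [Real.div_rpow hz0.le hu.le]
  field_simp

private lemma stmt2_key (σ : ℝ) (hσ : 1 < σ) (μ : ℝ → ℝ)
    (hμ_nonneg : ∀ z ∈ Set.Ioi (0:ℝ), 0 ≤ μ z)
    (hμ_int : IntegrableOn μ (Set.Ioi 0))
    (hmom : IntegrableOn (fun z => z ^ (σ - 1) * μ z) (Set.Ioi 0))
    (htail : ∀ a : ℝ, 0 < a → 0 < ∫ z in Set.Ioi a, μ z)
    {u v : ℝ} (hu : 0 < u) (huv : u < v) :
    (∫ z in Set.Ioi v, ((z / v) ^ (σ - 1) - 1) * μ z)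
      < ∫ z in Set.Ioi u, ((z / u) ^ (σ - 1) - 1) * μ z := by
  have hv : 0 < v := hu.trans huv
  have hp : (0:ℝ) < σ - 1 := by linarith
  set c : ℝ := (v / u) ^ (σ - 1) - 1 with hc_def
  have hb1 : 1 < (v / u) ^ (σ - 1) :=
    (Real.one_lt_rpow_iff_of_pos (by positivity)).mpr (Or.inl ⟨(one_lt_div hu).mpr huv, hp⟩)
  have hc : 0 < c := by simpa [hc_def] using sub_pos.mpr hb1
  have hIu := stmt2_integrable σ hσ μ hμ_int hmom hu
  have hIv := stmt2_integrable σ hσ μ hμ_int hmom hv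
  have hIuv : IntegrableOn (fun z => ((z / u) ^ (σ - 1) - 1) * μ z) (Set.Ioi v) :=
    hIu.mono_set (Set.Ioi_subset_Ioi huv.le)
  have hμv : IntegrableOn μ (Set.Ioi v) := hμ_int.mono_set (Set.Ioi_subset_Ioi hv.le)
  -- step 1
  have step1 : (∫ z in Set.Ioi v, ((z / u) ^ (σ - 1) - 1) * μ z)
      ≤ ∫ z in Set.Ioi u, ((z / u) ^ (σ - 1) - 1) * μ z := by
    refine setIntegral_mono_set hIu ?_ (HasSubset.Subset.eventuallyLE (Set.Ioi_subset_Ioi huv.le))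
    filter_upwards [ae_restrict_mem measurableSet_Ioi] with z hz
    have hz0 : (0:ℝ) < z := hu.trans hz
    have h1 : 1 ≤ (z / u) ^ (σ - 1) :=
      Real.one_le_rpow ((one_le_div hu).mpr hz.le) hp.le
    exact mul_nonneg (by linarith) (hμ_nonneg z hz0)
  -- step 2
  have step2 : (∫ z in Set.Ioi v, (((z / v) ^ (σ - 1) - 1) * μ z + c * μ z))
      ≤ ∫ z in Set.Ioi v, ((z / u) ^ (σ - 1) - 1) * μ z := by
    refine setIntegral_mono_on (hIv.add (hμv.const_mul c)) hIuv measurableSet_Ioi ?_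
    intro z hz
    have hz0 : (0:ℝ) < z := hv.trans hz
    have hμz : 0 ≤ μ z := hμ_nonneg z hz0
    have hsplit : z / u = (z / v) * (v / u) := by field_simp
    have hab : (z / u) ^ (σ - 1) = (z / v) ^ (σ - 1) * (v / u) ^ (σ - 1) := by
      rw [hsplit, Real.mul_rpow (by positivity) (by positivity)]
    have ha1 : 1 ≤ (z / v) ^ (σ - 1) :=
      Real.one_le_rpow ((one_le_div hv).mpr hz.le) hp.le
    have hb1' : 1 ≤ (v / u) ^ (σ - 1) := hb1.le
    set a := (z / v) ^ (σ - 1)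
    set b := (v / u) ^ (σ - 1)
    have key : (a - 1) + (b - 1) ≤ a * b - 1 := by nlinarith
    calc (a - 1) * μ z + c * μ z = ((a - 1) + (b - 1)) * μ z := by rw [hc_def]; ring
      _ ≤ (a * b - 1) * μ z := mul_le_mul_of_nonneg_right key hμz
      _ = ((z / u) ^ (σ - 1) - 1) * μ z := by rw [hab]
  have hadd : (∫ z in Set.Ioi v, (((z / v) ^ (σ - 1) - 1) * μ z + c * μ z))
      = (∫ z in Set.Ioi v, ((z / v) ^ (σ - 1) - 1) * μ z) + c * ∫ z in Set.Ioi v, μ z := by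
    rw [integral_add hIv (hμv.const_mul c), integral_const_mul]
  have hpos : 0 < c * ∫ z in Set.Ioi v, μ z := mul_pos hc (htail v hv)
  rw [hadd] at step2
  exact lt_of_lt_of_le (lt_add_of_pos_right _ hpos) (step2.trans step1)

/-- The function `G(u) = ∫_u^∞ ((z/u)^(σ-1) − 1) μ(z) dz` is
strictly decreasing on `(0,∞)`, hence the cutoff equation `G(z̄) = r` has at
most one solution for every `r > 0`. -/
theorem stmt2 (σ : ℝ) (hσ : 1 < σ)
    (μ : ℝ → ℝ) (hμ_nonneg : ∀ z ∈ Set.Ioi (0:ℝ), 0 ≤ μ z)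
    (hμ_prob : ∫ z in Set.Ioi (0:ℝ), μ z = 1)
    (hμ_int : IntegrableOn μ (Set.Ioi 0))
    (hmom : IntegrableOn (fun z => z ^ (σ - 1) * μ z) (Set.Ioi 0))
    (htail : ∀ a : ℝ, 0 < a → 0 < ∫ z in Set.Ioi a, μ z) :
    StrictAntiOn (fun u => ∫ z in Set.Ioi u, ((z / u) ^ (σ - 1) - 1) * μ z)
      (Set.Ioi (0:ℝ)) ∧
    ∀ r : ℝ, 0 < r → ∀ u₁ ∈ Set.Ioi (0:ℝ), ∀ u₂ ∈ Set.Ioi (0:ℝ),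
      (∫ z in Set.Ioi u₁, ((z / u₁) ^ (σ - 1) - 1) * μ z) = r →
      (∫ z in Set.Ioi u₂, ((z / u₂) ^ (σ - 1) - 1) * μ z) = r → u₁ = u₂ := by
  have hS : StrictAntiOn (fun u => ∫ z in Set.Ioi u, ((z / u) ^ (σ - 1) - 1) * μ z)
      (Set.Ioi (0:ℝ)) := fun u hu v _ huv =>
    stmt2_key σ hσ μ hμ_nonneg hμ_int hmom htail hu huv
  refine ⟨hS, fun r _ u₁ hu₁ u₂ hu₂ h1 h2 => hS.injOn hu₁ hu₂ (by rw [h1, h2])⟩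
end

section
/- Let σ > 1 and let μ be a probability density on (0,∞) with J(a) := ∫_a^∞ z^{σ-1} μ(z) dz finite for all a ≥ 0. Let 0 < z₁ < z₂ with ∫_{z₁}^{z₂} μ(z) dz > 0 and ∫_{z₂}^∞ μ(z) dz > 0, let E₁ > 0, E₃ := E₁(1 − J(z₂)/J(z₁)), and let m₁(z) = E₁ μ(z) 1{z ≥ z₁}, m₃(z) = E₁ μ(z) 1{z ≥ z₂} + E₃ μ(z) 1{z ≥ z₁}. Then the post-cycle number of firms is strictly smaller than the pre-cycle number: M₃ := ∫ m₃(z) dz < ∫ m₁(z) dz =: M₁. -/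
open MeasureTheory

/-- The fixed-cost cycle strictly reduces the number of firms:
`M₃ = ∫ m₃ < ∫ m₁ = M₁`, because exiters are replaced less than one-for-one. -/
theorem stmt4 (σ : ℝ) (hσ : 1 < σ)
    (μ : ℝ → ℝ) (hμ_nonneg : ∀ z ∈ Set.Ioi (0:ℝ), 0 ≤ μ z)
    (hμ_prob : ∫ z in Set.Ioi (0:ℝ), μ z = 1)
    (hμ_int : IntegrableOn μ (Set.Ioi 0))
    (hmom : IntegrableOn (fun z => z ^ (σ - 1) * μ z) (Set.Ioi 0))
    (z₁ z₂ : ℝ) (hz₁ : 0 < z₁) (hz₁₂ : z₁ < z₂)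
    (hmid : 0 < ∫ z in Set.Ico z₁ z₂, μ z)
    (htail : 0 < ∫ z in Set.Ici z₂, μ z)
    (E₁ E₃ : ℝ) (hE₁ : 0 < E₁)
    (hE₃ : E₃ = E₁ * (1 - (∫ z in Set.Ici z₂, z ^ (σ - 1) * μ z) /
                           (∫ z in Set.Ici z₁, z ^ (σ - 1) * μ z)))
    (m₁ m₃ : ℝ → ℝ)
    (hm₁ : ∀ z, m₁ z = E₁ * (if z₁ ≤ z then μ z else 0))
    (hm₃ : ∀ z, m₃ z = E₁ * (if z₂ ≤ z then μ z else 0)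
                        + E₃ * (if z₁ ≤ z then μ z else 0)) :
    ∫ z in Set.Ioi (0:ℝ), m₃ z < ∫ z in Set.Ioi (0:ℝ), m₁ z := by
  have hcpos : 0 < σ - 1 := by linarith
  have hz₂ : (0:ℝ) < z₂ := hz₁.trans hz₁₂
  -- subset facts
  have hsub1 : Set.Ici z₁ ⊆ Set.Ioi (0:ℝ) := fun z hz => lt_of_lt_of_le hz₁ hz
  have hsub2 : Set.Ici z₂ ⊆ Set.Ioi (0:ℝ) := fun z hz => lt_of_lt_of_le hz₂ hz
  have hsubm : Set.Ico z₁ z₂ ⊆ Set.Ioi (0:ℝ) := fun z hz => lt_of_lt_of_le hz₁ hz.1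
  have hdisj : Disjoint (Set.Ico z₁ z₂) (Set.Ici z₂) :=
    (Set.Iio_disjoint_Ici le_rfl).mono_left Set.Ico_subset_Iio_self
  -- abbreviations
  set P₁ := ∫ z in Set.Ici z₁, μ z with hP₁
  set P₂ := ∫ z in Set.Ici z₂, μ z with hP₂def
  set Pm := ∫ z in Set.Ico z₁ z₂, μ z with hPm
  set J₁ := ∫ z in Set.Ici z₁, z ^ (σ - 1) * μ z with hJ₁def
  set J₂ := ∫ z in Set.Ici z₂, z ^ (σ - 1) * μ z with hJ₂def
  set Jm := ∫ z in Set.Ico z₁ z₂, z ^ (σ - 1) * μ z with hJm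
  -- integrability on pieces
  have hμ1 := hμ_int.mono_set hsub1
  have hμ2 := hμ_int.mono_set hsub2
  have hμm := hμ_int.mono_set hsubm
  have hmom2 := hmom.mono_set hsub2
  have hmomm := hmom.mono_set hsubm
  -- splits
  have hPsplit : P₁ = Pm + P₂ := by
    rw [hP₁, ← Set.Ico_union_Ici_eq_Ici hz₁₂.le,
      setIntegral_union hdisj measurableSet_Ici hμm hμ2]
  have hJsplit : J₁ = Jm + J₂ := by
    rw [hJ₁def, ← Set.Ico_union_Ici_eq_Ici hz₁₂.le,
      setIntegral_union hdisj measurableSet_Ici hmomm hmom2]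
  -- Jm < z₂^(σ-1) * Pm (strict)
  have hgeq : (fun z => (z₂ ^ (σ - 1) - z ^ (σ - 1)) * μ z)
      = fun z => z₂ ^ (σ - 1) * μ z - z ^ (σ - 1) * μ z := by ext z; ring
  have hgint : IntegrableOn (fun z => (z₂ ^ (σ - 1) - z ^ (σ - 1)) * μ z) (Set.Ico z₁ z₂) := by
    rw [hgeq]; exact (hμm.const_mul _).sub hmomm
  have haeμ : 0 ≤ᵐ[volume.restrict (Set.Ico z₁ z₂)] μ :=
    Filter.eventually_of_mem (self_mem_ae_restrict measurableSet_Ico)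
      (fun z hz => hμ_nonneg z (hsubm hz))
  have haeg : 0 ≤ᵐ[volume.restrict (Set.Ico z₁ z₂)]
      fun z => (z₂ ^ (σ - 1) - z ^ (σ - 1)) * μ z :=
    Filter.eventually_of_mem (self_mem_ae_restrict measurableSet_Ico)
      (fun z hz => mul_nonneg
        (sub_nonneg.2 (Real.rpow_le_rpow (le_of_lt (hz₁.trans_le hz.1)) hz.2.le hcpos.le))
        (hμ_nonneg z (hsubm hz)))
  have hgpos : 0 < ∫ z in Set.Ico z₁ z₂, (z₂ ^ (σ - 1) - z ^ (σ - 1)) * μ z := by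
    rw [integral_pos_iff_support_of_nonneg_ae haeg hgint]
    have h0 : 0 < (volume.restrict (Set.Ico z₁ z₂)) (Function.support μ) :=
      (integral_pos_iff_support_of_nonneg_ae haeμ hμm).mp hmid
    refine lt_of_lt_of_le h0 ?_
    rw [Measure.restrict_apply' measurableSet_Ico, Measure.restrict_apply' measurableSet_Ico]
    refine measure_mono fun z hz => ?_
    refine ⟨?_, hz.2⟩
    have hfac : 0 < z₂ ^ (σ - 1) - z ^ (σ - 1) :=
      sub_pos.2 (Real.rpow_lt_rpow (le_of_lt (hz₁.trans_le hz.2.1)) hz.2.2 hcpos)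
    exact mul_ne_zero hfac.ne' hz.1
  have hJmlt : Jm < z₂ ^ (σ - 1) * Pm := by
    have : (∫ z in Set.Ico z₁ z₂, (z₂ ^ (σ - 1) - z ^ (σ - 1)) * μ z)
        = z₂ ^ (σ - 1) * Pm - Jm := by
      rw [hgeq, integral_sub (hμm.const_mul _) hmomm, integral_const_mul]
    linarith [hgpos, this ▸ hgpos]
  -- J₂ ≥ z₂^(σ-1) * P₂
  have hJ₂ge : z₂ ^ (σ - 1) * P₂ ≤ J₂ := by
    have h2 : 0 ≤ ∫ z in Set.Ici z₂, (z ^ (σ - 1) - z₂ ^ (σ - 1)) * μ z :=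
      setIntegral_nonneg measurableSet_Ici fun z hz =>
        mul_nonneg (sub_nonneg.2 (Real.rpow_le_rpow hz₂.le hz hcpos.le))
          (hμ_nonneg z (hsub2 hz))
    have heq : (∫ z in Set.Ici z₂, (z ^ (σ - 1) - z₂ ^ (σ - 1)) * μ z)
        = J₂ - z₂ ^ (σ - 1) * P₂ := by
      have : (fun z => (z ^ (σ - 1) - z₂ ^ (σ - 1)) * μ z)
          = fun z => z ^ (σ - 1) * μ z - z₂ ^ (σ - 1) * μ z := by ext z; ring
      rw [this, integral_sub hmom2 (hμ2.const_mul _), integral_const_mul]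
    linarith [heq ▸ h2]
  have hJmpos : 0 ≤ Jm :=
    setIntegral_nonneg measurableSet_Ico fun z hz =>
      mul_nonneg (Real.rpow_nonneg (le_of_lt (hz₁.trans_le hz.1)) _) (hμ_nonneg z (hsubm hz))
  have hzc : 0 < z₂ ^ (σ - 1) := Real.rpow_pos_of_pos hz₂ _
  have hJ₂pos : 0 < J₂ := lt_of_lt_of_le (mul_pos hzc htail) hJ₂ge
  have hJ₁pos : 0 < J₁ := by rw [hJsplit]; linarith
  -- compute the two integrals
  have hindfun : ∀ a : ℝ, (fun z => if a ≤ z then μ z else 0) = Set.indicator (Set.Ici a) μ := by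
    intro a; ext z; simp [Set.indicator_apply, Set.mem_Ici]
  have hind : ∀ a : ℝ, 0 < a →
      (∫ z in Set.Ioi (0:ℝ), (if a ≤ z then μ z else 0)) = ∫ z in Set.Ici a, μ z := by
    intro a ha
    rw [show (fun z => if a ≤ z then μ z else 0) = Set.indicator (Set.Ici a) μ from hindfun a,
      setIntegral_indicator measurableSet_Ici,
      show Set.Ioi (0:ℝ) ∩ Set.Ici a = Set.Ici a from
        Set.inter_eq_right.mpr (fun z hz => lt_of_lt_of_le ha hz)]
  have hindInt : ∀ a : ℝ, Integrable (fun z => if a ≤ z then μ z else 0)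
      (volume.restrict (Set.Ioi 0)) := by
    intro a; rw [hindfun a]; exact hμ_int.indicator measurableSet_Ici
  have hM₁ : (∫ z in Set.Ioi (0:ℝ), m₁ z) = E₁ * P₁ := by
    simp only [hm₁]; rw [integral_const_mul, hind z₁ hz₁]
  have hM₃ : (∫ z in Set.Ioi (0:ℝ), m₃ z) = E₁ * P₂ + E₃ * P₁ := by
    simp only [hm₃]
    rw [integral_add ((hindInt z₂).const_mul E₁) ((hindInt z₁).const_mul E₃),
      integral_const_mul, integral_const_mul, hind z₂ hz₂, hind z₁ hz₁]
  rw [hM₁, hM₃]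
  -- final arithmetic
  have hkey : P₂ * J₁ < J₂ * P₁ := by
    rw [hPsplit, hJsplit]
    nlinarith [mul_lt_mul_of_pos_left hJmlt htail, mul_le_mul_of_nonneg_right hJ₂ge hmid.le]
  have hdiv : P₂ < J₂ / J₁ * P₁ := by
    rw [div_mul_eq_mul_div, lt_div_iff₀ hJ₁pos]; linarith
  rw [hE₃]; nlinarith
end

section
/- Let σ > 1 and let μ be a probability density on (0,∞) with J(a) := ∫_a^∞ z^{σ-1} μ(z) dz finite for all a ≥ 0. Let 0 < z₁ < z₂ with ∫_{z₁}^{z₂} μ(z) dz > 0 and ∫_{z₂}^∞ μ(z) dz > 0, E₁ > 0, E₃ := E₁(1 − J(z₂)/J(z₁)), m₁(z) = E₁ μ(z) 1{z ≥ z₁}, m₃(z) = E₁ μ(z) 1{z ≥ z₂} + E₃ μ(z) 1{z ≥ z₁}, and M_i = ∫ m_i. Then the normalized post-cycle productivity distribution first-order stochastically dominates the pre-cycle one: for every a ≥ 0, (∫_a^∞ m₃(z) dz)/M₃ ≥ (∫_a^∞ m₁(z) dz)/M₁, with strict inequality for every a ≥ z₂ such that ∫_a^∞ μ(z) dz > 0.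 -/
open MeasureTheory

private lemma ind_eq (μ : ℝ → ℝ) (c : ℝ) :
    (fun z => if c ≤ z then μ z else 0) = (Set.Ici c).indicator μ := by
  funext z; simp [Set.indicator_apply, Set.mem_Ici]

private lemma ind_integral (μ : ℝ → ℝ) (c a : ℝ) :
    (∫ z in Set.Ioi a, (if c ≤ z then μ z else 0)) = ∫ z in Set.Ioi (max a c), μ z := by
  rw [ind_eq, setIntegral_indicator measurableSet_Ici]
  rcases le_or_gt c a with h | h
  · have h1 : Set.Ioi a ∩ Set.Ici c = Set.Ioi a :=
      Set.inter_eq_left.2 (fun z hz => le_trans h (le_of_lt hz))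
    rw [h1, max_eq_left h]
  · have h1 : Set.Ioi a ∩ Set.Ici c = Set.Ici c :=
      Set.inter_eq_right.2 (fun z hz => lt_of_lt_of_le h hz)
    rw [h1, max_eq_right h.le, MeasureTheory.integral_Ici_eq_integral_Ioi]

private lemma ind_int (μ : ℝ → ℝ) (hμ_int : IntegrableOn μ (Set.Ioi (0:ℝ)))
    (c a : ℝ) (ha : 0 ≤ a) :
    IntegrableOn (fun z => if c ≤ z then μ z else 0) (Set.Ioi a) := by
  rw [ind_eq]
  exact (hμ_int.mono_set (Set.Ioi_subset_Ioi ha)).indicator measurableSet_Ici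

/-- The normalized post-cycle productivity distribution first-order
stochastically dominates the pre-cycle one, strictly above the recession cutoff. -/
theorem stmt5 (σ : ℝ) (hσ : 1 < σ)
    (μ : ℝ → ℝ) (hμ_nonneg : ∀ z ∈ Set.Ioi (0:ℝ), 0 ≤ μ z)
    (hμ_prob : ∫ z in Set.Ioi (0:ℝ), μ z = 1)
    (hμ_int : IntegrableOn μ (Set.Ioi 0))
    (hmom : IntegrableOn (fun z => z ^ (σ - 1) * μ z) (Set.Ioi 0))
    (z₁ z₂ : ℝ) (hz₁ : 0 < z₁) (hz₁₂ : z₁ < z₂)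
    (hmid : 0 < ∫ z in Set.Ico z₁ z₂, μ z)
    (htail : 0 < ∫ z in Set.Ici z₂, μ z)
    (E₁ E₃ : ℝ) (hE₁ : 0 < E₁)
    (hE₃ : E₃ = E₁ * (1 - (∫ z in Set.Ici z₂, z ^ (σ - 1) * μ z) /
                           (∫ z in Set.Ici z₁, z ^ (σ - 1) * μ z)))
    (m₁ m₃ : ℝ → ℝ)
    (hm₁ : ∀ z, m₁ z = E₁ * (if z₁ ≤ z then μ z else 0))
    (hm₃ : ∀ z, m₃ z = E₁ * (if z₂ ≤ z then μ z else 0)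
                        + E₃ * (if z₁ ≤ z then μ z else 0))
    (M₁ M₃ : ℝ)
    (hM₁ : M₁ = ∫ z in Set.Ioi (0:ℝ), m₁ z)
    (hM₃ : M₃ = ∫ z in Set.Ioi (0:ℝ), m₃ z) :
    (∀ a : ℝ, 0 ≤ a →
      (∫ z in Set.Ioi a, m₁ z) / M₁ ≤ (∫ z in Set.Ioi a, m₃ z) / M₃) ∧
    (∀ a : ℝ, z₂ ≤ a → 0 < ∫ z in Set.Ioi a, μ z →
      (∫ z in Set.Ioi a, m₁ z) / M₁ < (∫ z in Set.Ioi a, m₃ z) / M₃) := by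
  have hz₂ : 0 < z₂ := lt_trans hz₁ hz₁₂
  have hσ' : (0:ℝ) ≤ σ - 1 := by linarith
  -- T b := tail probability
  obtain ⟨T, hT⟩ : ∃ T : ℝ → ℝ, T = fun b => ∫ z in Set.Ioi b, μ z := ⟨_, rfl⟩
  have hTapp : ∀ b, T b = ∫ z in Set.Ioi b, μ z := fun b => by rw [hT]
  -- nonnegativity on tails
  have hae : ∀ b : ℝ, 0 ≤ b → 0 ≤ᵐ[volume.restrict (Set.Ioi b)] μ := by
    intro b hb
    refine (ae_restrict_iff' measurableSet_Ioi).2 (Filter.Eventually.of_forall ?_)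
    intro z hz
    exact hμ_nonneg z (lt_of_le_of_lt hb hz)
  have hTnn : ∀ b : ℝ, 0 ≤ b → 0 ≤ T b := by
    intro b hb
    rw [hTapp]
    exact setIntegral_nonneg measurableSet_Ioi (fun z hz => hμ_nonneg z (lt_of_le_of_lt hb hz))
  have hTmono : ∀ b b' : ℝ, 0 ≤ b → b ≤ b' → T b' ≤ T b := by
    intro b b' hb hbb
    rw [hTapp, hTapp]
    exact setIntegral_mono_set (hμ_int.mono_set (Set.Ioi_subset_Ioi hb)) (hae b hb)
      (Filter.Eventually.of_forall (Set.Ioi_subset_Ioi hbb))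
  -- Ico/Ioc equality for μ
  have hIcoIoc : (∫ z in Set.Ico z₁ z₂, μ z) = ∫ z in Set.Ioc z₁ z₂, μ z := by
    rw [← setIntegral_congr_set (MeasureTheory.Ioo_ae_eq_Ico (a := z₁) (b := z₂)),
      setIntegral_congr_set (MeasureTheory.Ioo_ae_eq_Ioc (a := z₁) (b := z₂))]
  -- T z₁ = ∫_{Ioc z₁ z₂} + T z₂
  have hTsplit : T z₁ = (∫ z in Set.Ioc z₁ z₂, μ z) + T z₂ := by
    rw [hTapp, hTapp]
    rw [← Set.Ioc_union_Ioi_eq_Ioi hz₁₂.le,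
      setIntegral_union (Set.Ioc_disjoint_Ioi le_rfl) measurableSet_Ioi
        (hμ_int.mono_set (fun z hz => lt_of_lt_of_le hz₁ hz.1.le))
        (hμ_int.mono_set (Set.Ioi_subset_Ioi hz₂.le))]
  have hTz₂pos : 0 < T z₂ := by
    rw [hTapp, ← MeasureTheory.integral_Ici_eq_integral_Ioi]; exact htail
  have hTz₁gt : T z₂ < T z₁ := by
    rw [hTsplit, ← hIcoIoc]; linarith
  have hTz₁pos : 0 < T z₁ := lt_trans hTz₂pos hTz₁gt
  -- moment integrals J
  obtain ⟨J, hJ⟩ : ∃ J : ℝ → ℝ, J = fun c => ∫ z in Set.Ici c, z ^ (σ - 1) * μ z := ⟨_, rfl⟩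
  have hJapp : ∀ c, J c = ∫ z in Set.Ici c, z ^ (σ - 1) * μ z := fun c => by rw [hJ]
  have hJlb : ∀ c : ℝ, 0 < c → c ^ (σ - 1) * (∫ z in Set.Ici c, μ z) ≤ J c := by
    intro c hc
    have hsub : Set.Ici c ⊆ Set.Ioi (0:ℝ) := fun z hz => lt_of_lt_of_le hc hz
    rw [hJapp, ← MeasureTheory.integral_const_mul _ _]
    refine setIntegral_mono_on ((hμ_int.mono_set hsub).const_mul _)
      (hmom.mono_set hsub) measurableSet_Ici ?_
    intro z hz
    have hz0 : 0 < z := lt_of_lt_of_le hc hz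
    exact mul_le_mul_of_nonneg_right (Real.rpow_le_rpow hc.le hz hσ')
      (hμ_nonneg z hz0)
  have hJ₂pos : 0 < J z₂ := by
    refine lt_of_lt_of_le ?_ (hJlb z₂ hz₂)
    exact mul_pos (Real.rpow_pos_of_pos hz₂ _) htail
  -- J z₁ = ∫_{Ico z₁ z₂} + J z₂
  have hJsplit : J z₁ = (∫ z in Set.Ico z₁ z₂, z ^ (σ - 1) * μ z) + J z₂ := by
    rw [hJapp, hJapp]
    rw [← Set.Ico_union_Ici_eq_Ici hz₁₂.le,
      setIntegral_union ((Set.Iio_disjoint_Ici le_rfl).mono_left Set.Ico_subset_Iio_self)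
        measurableSet_Ici
        (hmom.mono_set (fun z hz => lt_of_lt_of_le hz₁ hz.1))
        (hmom.mono_set (fun z hz => lt_of_lt_of_le hz₂ hz))]
  have hJmidpos : 0 < ∫ z in Set.Ico z₁ z₂, z ^ (σ - 1) * μ z := by
    have hsub : Set.Ico z₁ z₂ ⊆ Set.Ioi (0:ℝ) := fun z hz => lt_of_lt_of_le hz₁ hz.1
    have h1 : z₁ ^ (σ - 1) * (∫ z in Set.Ico z₁ z₂, μ z)
        ≤ ∫ z in Set.Ico z₁ z₂, z ^ (σ - 1) * μ z := by
      rw [← MeasureTheory.integral_const_mul _ _]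
      refine setIntegral_mono_on ((hμ_int.mono_set hsub).const_mul _)
        (hmom.mono_set hsub) measurableSet_Ico ?_
      intro z hz
      exact mul_le_mul_of_nonneg_right (Real.rpow_le_rpow hz₁.le hz.1 hσ')
        (hμ_nonneg z (hsub hz))
    exact lt_of_lt_of_le (mul_pos (Real.rpow_pos_of_pos hz₁ _) hmid) h1
  have hJ₁gt : J z₂ < J z₁ := by rw [hJsplit]; linarith
  have hJ₁pos : 0 < J z₁ := lt_trans hJ₂pos hJ₁gt
  -- bounds on E₃
  have hE₃pos : 0 < E₃ := by
    rw [hE₃]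
    have : J z₂ / J z₁ < 1 := (div_lt_one hJ₁pos).2 hJ₁gt
    have h2 : (0:ℝ) < 1 - (∫ z in Set.Ici z₂, z ^ (σ - 1) * μ z) /
        (∫ z in Set.Ici z₁, z ^ (σ - 1) * μ z) := by
      rw [hJapp, hJapp] at this
      linarith
    exact mul_pos hE₁ h2
  -- tail integrals of m₁, m₃
  have hN₁ : ∀ a : ℝ, (∫ z in Set.Ioi a, m₁ z) = E₁ * T (max a z₁) := by
    intro a
    simp only [hm₁]
    rw [MeasureTheory.integral_const_mul _ _, ind_integral, hTapp]
  have hN₃ : ∀ a : ℝ, 0 ≤ a →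
      (∫ z in Set.Ioi a, m₃ z) = E₁ * T (max a z₂) + E₃ * T (max a z₁) := by
    intro a ha
    simp only [hm₃]
    rw [MeasureTheory.integral_add ((ind_int μ hμ_int z₂ a ha).const_mul E₁)
        ((ind_int μ hμ_int z₁ a ha).const_mul E₃),
      MeasureTheory.integral_const_mul _ _, MeasureTheory.integral_const_mul _ _,
      ind_integral, ind_integral, hTapp, hTapp]
  -- masses
  have hM₁' : M₁ = E₁ * T z₁ := by
    rw [hM₁, hN₁ 0, max_eq_right hz₁.le]
  have hM₃' : M₃ = E₁ * T z₂ + E₃ * T z₁ := by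
    rw [hM₃, hN₃ 0 le_rfl, max_eq_right hz₂.le, max_eq_right hz₁.le]
  have hM₁pos : 0 < M₁ := by rw [hM₁']; exact mul_pos hE₁ hTz₁pos
  have hM₃pos : 0 < M₃ := by
    rw [hM₃']
    have := mul_pos hE₁ hTz₂pos
    have := mul_pos hE₃pos hTz₁pos
    linarith
  constructor
  · intro a ha
    rw [hN₁ a, hN₃ a ha, div_le_div_iff₀ hM₁pos hM₃pos, hM₁', hM₃']
    have hkey : T z₂ * T (max a z₁) ≤ T z₁ * T (max a z₂) := by
      rcases le_or_gt a z₂ with h | h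
      · rw [max_eq_right h]
        have h1 : T (max a z₁) ≤ T z₁ := hTmono z₁ (max a z₁) hz₁.le (le_max_right a z₁)
        have h2 : 0 ≤ T z₂ := hTz₂pos.le
        nlinarith
      · have ha1 : max a z₁ = a := max_eq_left (le_of_lt (lt_trans hz₁₂ h))
        have ha2 : max a z₂ = a := max_eq_left h.le
        rw [ha1, ha2]
        have h1 : 0 ≤ T a := hTnn a (le_of_lt (lt_trans hz₂ h))
        nlinarith [hTz₁gt.le]
    nlinarith [mul_le_mul_of_nonneg_left hkey (mul_pos hE₁ hE₁).le,
      mul_pos hE₃pos hTz₁pos, mul_pos hE₁ hE₁]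
  · intro a ha hTa
    have ha0 : 0 ≤ a := le_trans hz₂.le ha
    have ha1 : max a z₁ = a := max_eq_left (le_trans hz₁₂.le ha)
    have ha2 : max a z₂ = a := max_eq_left ha
    rw [hN₁ a, hN₃ a ha0, ha1, ha2, div_lt_div_iff₀ hM₁pos hM₃pos, hM₁', hM₃']
    have hTa' : 0 < T a := by rw [hTapp]; exact hTa
    have h := mul_pos (mul_pos (mul_pos hE₁ hE₁) hTa') (sub_pos.2 hTz₁gt)
    have expand : (E₁ * T a + E₃ * T a) * (E₁ * T z₁)
        - E₁ * T a * (E₁ * T z₂ + E₃ * T z₁)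
        = E₁ * E₁ * T a * (T z₁ - T z₂) := by ring
    linarith [h, expand]
end

section
/- Let σ > 1, f^c > 0, and let μ be a probability density on (0,∞). Let 0 < z₁ < z₂ with ∫_{z₁}^{z₂} μ > 0 and ∫_{z₂}^∞ μ > 0, write p_i = ∫_{z_i}^∞ μ(z) dz and J_i = ∫_{z_i}^∞ z^{σ−1} μ(z) dz (assumed finite, with J₁ > 0). Let E₁ > 0, M₁ := E₁ p₁, Z₁ := E₁ J₁. Suppose E₃ ≥ 0 and M₃ satisfy the general-equilibrium post-recession entry system: M₃ = E₁ p₂ + E₃ p₁ and E₃ = E₁ (1 − J₂/J₁) + (M₁ − M₃) · z₁^{σ−1} / ((σ−1) J₁). Then M₃ < M₁, E₃ > E₁(1 − J₂/J₁), and Z₃ := E₁ J₂ + E₃ J₁ > Z₁. -/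
open MeasureTheory

/-- In the general-equilibrium post-recession entry system, the
number of firms falls (`M₃ < M₁`), entry exceeds its partial-equilibrium level
(labor-saving effect), and market intensity rises (`Z₃ > Z₁`). -/
theorem stmt8 (σ fc : ℝ) (hσ : 1 < σ) (hfc : 0 < fc)
    (μ : ℝ → ℝ) (hμ_nonneg : ∀ z ∈ Set.Ioi (0:ℝ), 0 ≤ μ z)
    (hμ_prob : ∫ z in Set.Ioi (0:ℝ), μ z = 1)
    (hμ_int : IntegrableOn μ (Set.Ioi 0))
    (hmom : IntegrableOn (fun z => z ^ (σ - 1) * μ z) (Set.Ioi 0))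
    (z₁ z₂ : ℝ) (hz₁ : 0 < z₁) (hz₁₂ : z₁ < z₂)
    (p₁ p₂ J₁ J₂ : ℝ)
    (hp₁ : p₁ = ∫ z in Set.Ici z₁, μ z) (hp₂ : p₂ = ∫ z in Set.Ici z₂, μ z)
    (hJ₁ : J₁ = ∫ z in Set.Ici z₁, z ^ (σ - 1) * μ z)
    (hJ₂ : J₂ = ∫ z in Set.Ici z₂, z ^ (σ - 1) * μ z)
    (hJ₁pos : 0 < J₁)
    (hmid : 0 < ∫ z in Set.Ico z₁ z₂, μ z)
    (htail : 0 < ∫ z in Set.Ici z₂, μ z)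
    (E₁ : ℝ) (hE₁ : 0 < E₁)
    (M₁ Z₁ : ℝ) (hM₁ : M₁ = E₁ * p₁) (hZ₁ : Z₁ = E₁ * J₁)
    (E₃ M₃ : ℝ) (hE₃nn : 0 ≤ E₃)
    (hsys₁ : M₃ = E₁ * p₂ + E₃ * p₁)
    (hsys₂ : E₃ = E₁ * (1 - J₂ / J₁) + (M₁ - M₃) * z₁ ^ (σ - 1) / ((σ - 1) * J₁)) :
    M₃ < M₁ ∧ E₁ * (1 - J₂ / J₁) < E₃ ∧ Z₁ < E₁ * J₂ + E₃ * J₁ := by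
  have hσ1 : (0:ℝ) < σ - 1 := by linarith
  have hz₂ : (0:ℝ) < z₂ := lt_trans hz₁ hz₁₂
  have hsub1 : Set.Ici z₁ ⊆ Set.Ioi (0:ℝ) := fun z hz => lt_of_lt_of_le hz₁ hz
  have hsub2 : Set.Ici z₂ ⊆ Set.Ioi (0:ℝ) := fun z hz => lt_of_lt_of_le hz₂ hz
  have hsubm : Set.Ico z₁ z₂ ⊆ Set.Ioi (0:ℝ) := fun z hz => lt_of_lt_of_le hz₁ hz.1
  have hμ1 : IntegrableOn μ (Set.Ici z₁) := hμ_int.mono_set hsub1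
  have hμ2 : IntegrableOn μ (Set.Ici z₂) := hμ_int.mono_set hsub2
  have hμm : IntegrableOn μ (Set.Ico z₁ z₂) := hμ_int.mono_set hsubm
  have hm1 : IntegrableOn (fun z => z ^ (σ - 1) * μ z) (Set.Ici z₁) := hmom.mono_set hsub1
  have hm2 : IntegrableOn (fun z => z ^ (σ - 1) * μ z) (Set.Ici z₂) := hmom.mono_set hsub2
  have hmm : IntegrableOn (fun z => z ^ (σ - 1) * μ z) (Set.Ico z₁ z₂) := hmom.mono_set hsubm
  set pm : ℝ := ∫ z in Set.Ico z₁ z₂, μ z with hpm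
  set Jm : ℝ := ∫ z in Set.Ico z₁ z₂, z ^ (σ - 1) * μ z with hJm
  have hdisj : Disjoint (Set.Ico z₁ z₂) (Set.Ici z₂) := by
    rw [Set.disjoint_left]
    intro a ha ha'
    exact absurd (Set.mem_Ici.mp ha') (not_le.mpr ha.2)
  have hunion : Set.Ico z₁ z₂ ∪ Set.Ici z₂ = Set.Ici z₁ := Set.Ico_union_Ici_eq_Ici hz₁₂.le
  have hp_split : p₁ = pm + p₂ := by
    rw [hp₁, hp₂, hpm, ← hunion, setIntegral_union hdisj measurableSet_Ici hμm hμ2]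
  have hJ_split : J₁ = Jm + J₂ := by
    rw [hJ₁, hJ₂, hJm, ← hunion, setIntegral_union hdisj measurableSet_Ici hmm hm2]
  -- p₂ > 0
  have hp₂pos : 0 < p₂ := by rw [hp₂]; exact htail
  have hpmpos : 0 < pm := hmid
  -- J₂ ≥ z₂^(σ-1) * p₂
  have hJ2ge : z₂ ^ (σ - 1) * p₂ ≤ J₂ := by
    rw [hp₂, hJ₂, ← integral_const_mul]
    refine setIntegral_mono_on ((hμ2.const_mul _)) hm2 measurableSet_Ici ?_
    intro z hz
    have hzpos : (0:ℝ) < z := lt_of_lt_of_le hz₂ hz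
    exact mul_le_mul_of_nonneg_right
      (Real.rpow_le_rpow hz₂.le hz hσ1.le) (hμ_nonneg z hzpos)
  -- strict inequality on the middle interval: Jm < z₂^(σ-1) * pm
  have hstrict : Jm < z₂ ^ (σ - 1) * pm := by
    have hfac : ∀ z ∈ Set.Ico z₁ z₂, 0 < z₂ ^ (σ - 1) - z ^ (σ - 1) := by
      intro z hz
      have : z ^ (σ - 1) < z₂ ^ (σ - 1) :=
        Real.rpow_lt_rpow (lt_of_lt_of_le hz₁ hz.1).le hz.2 hσ1
      linarith
    have hint : IntegrableOn (fun z => z₂ ^ (σ - 1) * μ z - z ^ (σ - 1) * μ z)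
        (Set.Ico z₁ z₂) := (hμm.const_mul _).sub hmm
    have hval : ∫ z in Set.Ico z₁ z₂, (z₂ ^ (σ - 1) * μ z - z ^ (σ - 1) * μ z)
        = z₂ ^ (σ - 1) * pm - Jm := by
      rw [integral_sub (hμm.const_mul _) hmm, integral_const_mul]
    have hnn : 0 ≤ ∫ z in Set.Ico z₁ z₂, (z₂ ^ (σ - 1) * μ z - z ^ (σ - 1) * μ z) := by
      refine setIntegral_nonneg measurableSet_Ico (fun z hz => ?_)
      have hμz : 0 ≤ μ z := hμ_nonneg z (hsubm hz)
      nlinarith [hfac z hz]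
    rcases hnn.lt_or_eq with h | h
    · linarith [hval ▸ h]
    · exfalso
      have hae : (fun z => z₂ ^ (σ - 1) * μ z - z ^ (σ - 1) * μ z)
          =ᵐ[volume.restrict (Set.Ico z₁ z₂)] 0 := by
        refine (integral_eq_zero_iff_of_nonneg_ae ?_ hint).mp h.symm
        refine (ae_restrict_iff' measurableSet_Ico).mpr (Filter.Eventually.of_forall ?_)
        intro z hz
        have hμz : 0 ≤ μ z := hμ_nonneg z (hsubm hz)
        have := hfac z hz
        simp only [Pi.zero_apply]
        nlinarith
      have hae' : μ =ᵐ[volume.restrict (Set.Ico z₁ z₂)] 0 := by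
        have h1 := (ae_restrict_iff' measurableSet_Ico).mp hae
        refine (ae_restrict_iff' measurableSet_Ico).mpr ?_
        filter_upwards [h1] with z hz hmem
        have hfz := hz hmem
        have hpos := hfac z hmem
        simp only [Pi.zero_apply] at hfz ⊢
        have : (z₂ ^ (σ - 1) - z ^ (σ - 1)) * μ z = 0 := by ring_nf; ring_nf at hfz; linarith
        rcases mul_eq_zero.mp this with h' | h'
        · linarith
        · exact h'
      have : pm = 0 := by
        rw [hpm]
        exact integral_eq_zero_of_ae hae'
      linarith
  -- key inequality
  have hkey : p₂ * J₁ < p₁ * J₂ := by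
    rw [hp_split, hJ_split]
    nlinarith [mul_le_mul_of_nonneg_right hJ2ge hpmpos.le, mul_lt_mul_of_pos_left hstrict hp₂pos]
  have hp₁nn : 0 ≤ p₁ := by
    rw [hp₁]
    exact setIntegral_nonneg measurableSet_Ici (fun z hz => hμ_nonneg z (hsub1 hz))
  have hzp : 0 < z₁ ^ (σ - 1) := Real.rpow_pos_of_pos hz₁ _
  have hJ₁ne : J₁ ≠ 0 := hJ₁pos.ne'
  have hσne : σ - 1 ≠ 0 := hσ1.ne'
  have h2 : E₃ * ((σ - 1) * J₁) = E₁ * (J₁ - J₂) * (σ - 1) + (M₁ - M₃) * z₁ ^ (σ - 1) := by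
    rw [hsys₂]; field_simp
  have hD : (M₁ - M₃) * ((σ - 1) * J₁ + p₁ * z₁ ^ (σ - 1))
      = E₁ * (p₁ * J₂ - p₂ * J₁) * (σ - 1) := by
    linear_combination ((σ - 1) * J₁) * hM₁ - ((σ - 1) * J₁) * hsys₁ - p₁ * h2
  have hMpos : 0 < (σ - 1) * J₁ + p₁ * z₁ ^ (σ - 1) :=
    add_pos_of_pos_of_nonneg (mul_pos hσ1 hJ₁pos) (mul_nonneg hp₁nn hzp.le)
  have hRpos : 0 < E₁ * (p₁ * J₂ - p₂ * J₁) * (σ - 1) :=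
    mul_pos (mul_pos hE₁ (by linarith)) hσ1
  have hDpos : 0 < M₁ - M₃ := by
    by_contra h
    push_neg at h
    have hle : (M₁ - M₃) * ((σ - 1) * J₁ + p₁ * z₁ ^ (σ - 1)) ≤ 0 :=
      mul_nonpos_of_nonpos_of_nonneg h hMpos.le
    rw [hD] at hle
    linarith
  have hE₃gt : E₁ * (1 - J₂ / J₁) < E₃ := by
    rw [hsys₂]
    have : 0 < (M₁ - M₃) * z₁ ^ (σ - 1) / ((σ - 1) * J₁) :=
      div_pos (mul_pos hDpos hzp) (mul_pos hσ1 hJ₁pos)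
    linarith
  refine ⟨by linarith, hE₃gt, ?_⟩
  rw [hZ₁]
  have hmul : E₁ * (1 - J₂ / J₁) * J₁ < E₃ * J₁ := mul_lt_mul_of_pos_right hE₃gt hJ₁pos
  have hexp : E₁ * (1 - J₂ / J₁) * J₁ = E₁ * J₁ - E₁ * J₂ := by
    field_simp
  linarith
end

section
/- Let σ > 1, 0 < z₁, E₁ > 0, and let μ be a continuous probability density on (0,∞) that is strictly positive on [z₁,∞), with p(a) = ∫_a^∞ μ(z) dz and J(a) = ∫_a^∞ z^{σ−1} μ(z) dz finite for all a, and set p₁ = p(z₁), J₁ = J(z₁), M₁ = E₁ p₁. Define for u ≥ z₁ the long-run mass of firms after a crisis with recession cutoff u: M₃(u) = [ E₁ p(u) + E₁ p₁ (1 − J(u)/J₁) + E₁ p₁² z₁^{σ−1}/((σ−1) J₁) ] / ( 1 + p₁ z₁^{σ−1}/((σ−1) J₁) ). Then: (i) M₃(z₁) = M₁ and lim_{u→∞} M₃(u) = M₁; (ii) M₃(u) < M₁ for every u > z₁; (iii) M₃ is continuously differentiable and attains a unique global minimum at some u* ∈ (z₁, ∞), being strictly decreasing on [z₁, u*] and strictly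 increasing on [u*, ∞); (iv) consequently, for every u ∈ (z₁, u*) there exists u′ ∈ (u*, ∞) with M₃(u) = M₃(u′). -/
open MeasureTheory

open Set Filter in
private lemma tail_split (f : ℝ → ℝ) (hfi : IntegrableOn f (Set.Ioi 0)) :
    ∀ a b : ℝ, 0 < a → a ≤ b →
      (∫ z in Set.Ioi a, f z) = (∫ z in a..b, f z) + ∫ z in Set.Ioi b, f z := by
  intro a b ha hab
  rw [intervalIntegral.integral_of_le hab, ← setIntegral_union
    (Set.Ioc_disjoint_Ioi le_rfl) measurableSet_Ioi
    (hfi.mono_set (fun x hx => lt_of_lt_of_le ha (le_of_lt hx.1)))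
    (hfi.mono_set (fun x hx => lt_of_lt_of_le ha (hab.trans (le_of_lt hx)))),
    Set.Ioc_union_Ioi_eq_Ioi hab]

open Set Filter in
private lemma tail_pos (f : ℝ → ℝ) (hfi : IntegrableOn f (Set.Ioi 0))
    (z₁ : ℝ) (hz₁ : 0 < z₁)
    (hnn : ∀ x ∈ Set.Ioi z₁, 0 ≤ f x)
    (hpos : ∀ x ∈ Set.Ioo z₁ (z₁ + 1), 0 < f x) :
    0 < ∫ z in Set.Ioi z₁, f z := by
  rw [tail_split f hfi z₁ (z₁ + 1) hz₁ (by linarith)]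
  have h1 : 0 < ∫ z in z₁..(z₁ + 1), f z := by
    refine intervalIntegral.intervalIntegral_pos_of_pos_on ?_ hpos (by linarith)
    refine (hfi.mono_set ?_).intervalIntegrable
    intro x hx
    exact lt_of_lt_of_le (lt_min hz₁ (by linarith)) hx.1
  have h2 : 0 ≤ ∫ z in Set.Ioi (z₁ + 1), f z :=
    setIntegral_nonneg measurableSet_Ioi (fun x hx => hnn x (by
      simp only [Set.mem_Ioi] at hx ⊢; linarith))
  linarith

open Set Filter in
private lemma tail_props (f : ℝ → ℝ) (hfc : ContinuousOn f (Set.Ioi 0))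
    (hfi : IntegrableOn f (Set.Ioi 0)) (z₁ : ℝ) (hz₁ : 0 < z₁) :
    (∀ x : ℝ, 0 < x → HasDerivAt (fun a => ∫ z in Set.Ioi a, f z) (-(f x)) x) ∧
    ContDiffOn ℝ 1 (fun a => ∫ z in Set.Ioi a, f z) (Set.Ioi 0) ∧
    Tendsto (fun a => ∫ z in Set.Ioi a, f z) atTop (nhds 0) := by
  have hii : ∀ a b : ℝ, 0 < a → 0 < b → IntervalIntegrable f volume a b := by
    intro a b ha hb
    refine (hfi.mono_set ?_).intervalIntegrable
    intro x hx
    exact lt_of_lt_of_le (lt_min ha hb) hx.1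
  have hrep : ∀ a : ℝ, 0 < a →
      (∫ z in Set.Ioi a, f z) = (∫ z in Set.Ioi z₁, f z) - ∫ z in z₁..a, f z := by
    intro a ha
    rcases le_total z₁ a with h | h
    · rw [tail_split f hfi z₁ a hz₁ h]; ring
    · rw [tail_split f hfi a z₁ ha h, intervalIntegral.integral_symm]; ring
  have hF : ∀ x : ℝ, 0 < x →
      HasDerivAt (fun a => ∫ z in z₁..a, f z) (f x) x := by
    intro x hx
    exact intervalIntegral.integral_hasDerivAt_right (hii z₁ x hz₁ hx)
      (ContinuousOn.stronglyMeasurableAtFilter isOpen_Ioi hfc x hx)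
      (hfc.continuousAt (isOpen_Ioi.mem_nhds hx))
  have hder : ∀ x : ℝ, 0 < x →
      HasDerivAt (fun a => ∫ z in Set.Ioi a, f z) (-(f x)) x := by
    intro x hx
    have h1 : HasDerivAt (fun a => (∫ z in Set.Ioi z₁, f z) - ∫ z in z₁..a, f z)
        (-(f x)) x := (hF x hx).const_sub _
    refine h1.congr_of_eventuallyEq ?_
    filter_upwards [isOpen_Ioi.mem_nhds hx] with y hy
    exact hrep y hy
  refine ⟨hder, ?_, ?_⟩
  · have heq : Set.EqOn (fun a => ∫ z in Set.Ioi a, f z)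
        (fun a => (∫ z in Set.Ioi z₁, f z) - ∫ z in z₁..a, f z) (Set.Ioi 0) :=
      fun a ha => hrep a ha
    refine ContDiffOn.congr ?_ heq
    rw [show (1 : WithTop ℕ∞) = 0 + 1 by norm_num,
      contDiffOn_succ_iff_deriv_of_isOpen isOpen_Ioi]
    refine ⟨fun x hx => (((hF x hx).const_sub _).differentiableAt).differentiableWithinAt,
      by simp, ?_⟩
    rw [contDiffOn_zero]
    have : Set.EqOn (deriv (fun a => (∫ z in Set.Ioi z₁, f z) - ∫ z in z₁..a, f z))
        (fun x => -(f x)) (Set.Ioi 0) := by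
      intro x hx
      exact ((hF x hx).const_sub _).deriv
    exact ContinuousOn.congr (hfc.neg) this
  · have h1 : Tendsto (fun a : ℝ => ∫ z in z₁..a, f z) atTop
        (nhds (∫ z in Set.Ioi z₁, f z)) :=
      intervalIntegral_tendsto_integral_Ioi z₁
        (hfi.mono_set (fun x hx => lt_trans hz₁ hx)) tendsto_id
    have h2 : Tendsto (fun a : ℝ => (∫ z in Set.Ioi z₁, f z) - ∫ z in z₁..a, f z)
        atTop (nhds 0) := by
      have := (tendsto_const_nhds
        (x := (∫ z in Set.Ioi z₁, f z)) (f := atTop (α := ℝ))).sub h1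
      simpa using this
    refine h2.congr' ?_
    filter_upwards [eventually_gt_atTop 0] with a ha
    exact (hrep a ha).symm

/-- Lemma 2, Recessions Depth and Cleansing Effects: the long-run
mass of firms `M₃(u)` after a crisis with recession cutoff `u` equals `M₁` at
`u = z₁` and in the limit `u → ∞`, lies strictly below `M₁` for `u > z₁`, is
continuously differentiable, attains a unique global minimum at some
`u* ∈ (z₁, ∞)` (strictly decreasing before, strictly increasing after), and
every value on the decreasing branch is repeated on the increasing branch. -/
theorem stmt9 (σ : ℝ) (hσ : 1 < σ)
    (z₁ E₁ : ℝ) (hz₁ : 0 < z₁) (hE₁ : 0 < E₁)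
    (μ : ℝ → ℝ)
    (hμc : ContinuousOn μ (Set.Ioi 0))
    (hμnn : ∀ z ∈ Set.Ioi (0:ℝ), 0 ≤ μ z)
    (hμpos : ∀ z ∈ Set.Ici z₁, 0 < μ z)
    (hμ_prob : ∫ z in Set.Ioi (0:ℝ), μ z = 1)
    (hμ_int : IntegrableOn μ (Set.Ioi 0))
    (hmom : IntegrableOn (fun z => z ^ (σ - 1) * μ z) (Set.Ioi 0))
    (p J : ℝ → ℝ)
    (hp : ∀ a, p a = ∫ z in Set.Ioi a, μ z)
    (hJ : ∀ a, J a = ∫ z in Set.Ioi a, z ^ (σ - 1) * μ z)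
    (p₁ J₁ M₁ : ℝ) (hp₁ : p₁ = p z₁) (hJ₁ : J₁ = J z₁) (hM₁ : M₁ = E₁ * p₁)
    (M₃ : ℝ → ℝ)
    (hM₃ : ∀ u, M₃ u =
      (E₁ * p u + E₁ * p₁ * (1 - J u / J₁)
        + E₁ * p₁ ^ 2 * z₁ ^ (σ - 1) / ((σ - 1) * J₁)) /
        (1 + p₁ * z₁ ^ (σ - 1) / ((σ - 1) * J₁))) :
    M₃ z₁ = M₁ ∧
    Filter.Tendsto M₃ Filter.atTop (nhds M₁) ∧
    (∀ u : ℝ, z₁ < u → M₃ u < M₁) ∧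
    ContDiffOn ℝ 1 M₃ (Set.Ici z₁) ∧
    (∃ ustar : ℝ, z₁ < ustar ∧
      StrictAntiOn M₃ (Set.Icc z₁ ustar) ∧
      StrictMonoOn M₃ (Set.Ici ustar) ∧
      (∀ u ∈ Set.Ici z₁, M₃ ustar ≤ M₃ u) ∧
      (∀ v ∈ Set.Ici z₁, (∀ u ∈ Set.Ici z₁, M₃ v ≤ M₃ u) → v = ustar) ∧
      (∀ u : ℝ, z₁ < u → u < ustar → ∃ u' : ℝ, ustar < u' ∧ M₃ u = M₃ u')) := by
  have hs : (0:ℝ) < σ - 1 := by linarith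
  have hgc : ContinuousOn (fun z : ℝ => z ^ (σ - 1) * μ z) (Set.Ioi 0) := by
    intro x hx
    exact ((Real.continuousAt_rpow_const x (σ - 1)
      (Or.inr hs.le)).continuousWithinAt).mul (hμc x hx)
  obtain ⟨pder, pcd, ptend⟩ := tail_props μ hμc hμ_int z₁ hz₁
  obtain ⟨Jder, Jcd, Jtend⟩ := tail_props (fun z : ℝ => z ^ (σ - 1) * μ z) hgc hmom z₁ hz₁
  have hpfun : p = fun a => ∫ z in Set.Ioi a, μ z := funext hp
  have hJfun : J = fun a => ∫ z in Set.Ioi a, z ^ (σ - 1) * μ z := funext hJ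
  have pder' : ∀ x : ℝ, 0 < x → HasDerivAt p (-(μ x)) x := by
    intro x hx; rw [hpfun]; exact pder x hx
  have Jder' : ∀ x : ℝ, 0 < x → HasDerivAt J (-(x ^ (σ - 1) * μ x)) x := by
    intro x hx; rw [hJfun]; exact Jder x hx
  have pcd' : ContDiffOn ℝ 1 p (Set.Ioi 0) := by rw [hpfun]; exact pcd
  have Jcd' : ContDiffOn ℝ 1 J (Set.Ioi 0) := by rw [hJfun]; exact Jcd
  have ptend' : Filter.Tendsto p Filter.atTop (nhds 0) := by rw [hpfun]; exact ptend
  have Jtend' : Filter.Tendsto J Filter.atTop (nhds 0) := by rw [hJfun]; exact Jtend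
  -- positivity facts
  have hp₁pos : 0 < p₁ := by
    rw [hp₁, hp]
    exact tail_pos μ hμ_int z₁ hz₁ (fun x hx => hμnn x (lt_trans hz₁ hx))
      (fun x hx => hμpos x (le_of_lt hx.1))
  have hJ₁pos : 0 < J₁ := by
    rw [hJ₁, hJ]
    exact tail_pos (fun z : ℝ => z ^ (σ - 1) * μ z) hmom z₁ hz₁
      (fun x hx => mul_nonneg (Real.rpow_nonneg (le_of_lt (lt_trans hz₁ hx)) _)
        (hμnn x (lt_trans hz₁ hx)))
      (fun x hx => mul_pos (Real.rpow_pos_of_pos (lt_trans hz₁ hx.1) _)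
        (hμpos x (le_of_lt hx.1)))
  have hkey : p₁ * z₁ ^ (σ - 1) < J₁ := by
    have hint2 : IntegrableOn (fun z => z₁ ^ (σ - 1) * μ z) (Set.Ioi 0) :=
      hμ_int.const_mul _
    have hint3 : IntegrableOn (fun z : ℝ => z ^ (σ - 1) * μ z - z₁ ^ (σ - 1) * μ z)
        (Set.Ioi 0) := by
      have := hmom.sub hint2
      simpa [Pi.sub_def] using this
    have hdiffpos : 0 < ∫ z in Set.Ioi z₁,
        (z ^ (σ - 1) * μ z - z₁ ^ (σ - 1) * μ z) := by
      refine tail_pos (fun z : ℝ => z ^ (σ - 1) * μ z - z₁ ^ (σ - 1) * μ z)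
        hint3 z₁ hz₁ ?_ ?_
      · intro x hx
        simp only [Set.mem_Ioi] at hx
        show 0 ≤ x ^ (σ - 1) * μ x - z₁ ^ (σ - 1) * μ x
        have h1 : z₁ ^ (σ - 1) ≤ x ^ (σ - 1) :=
          Real.rpow_le_rpow hz₁.le hx.le hs.le
        have h2 : 0 ≤ μ x := hμnn x (lt_trans hz₁ hx)
        nlinarith
      · intro x hx
        show 0 < x ^ (σ - 1) * μ x - z₁ ^ (σ - 1) * μ x
        have h1 : z₁ ^ (σ - 1) < x ^ (σ - 1) :=
          Real.rpow_lt_rpow hz₁.le hx.1 hs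
        have h2 : 0 < μ x := hμpos x (le_of_lt hx.1)
        nlinarith
    have hdiff : J₁ - p₁ * z₁ ^ (σ - 1)
        = ∫ z in Set.Ioi z₁, (z ^ (σ - 1) * μ z - z₁ ^ (σ - 1) * μ z) := by
      have h5 : IntegrableOn (fun z : ℝ => z ^ (σ - 1) * μ z) (Set.Ioi z₁) :=
        hmom.mono_set (Set.Ioi_subset_Ioi hz₁.le)
      have h6 : IntegrableOn (fun z : ℝ => z₁ ^ (σ - 1) * μ z) (Set.Ioi z₁) :=
        hint2.mono_set (Set.Ioi_subset_Ioi hz₁.le)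
      rw [hJ₁, hJ, hp₁, hp, integral_sub h5 h6, MeasureTheory.integral_const_mul]
      ring
    linarith
  have hz₁s : 0 < z₁ ^ (σ - 1) := Real.rpow_pos_of_pos hz₁ _
  have hDpos : 0 < 1 + p₁ * z₁ ^ (σ - 1) / ((σ - 1) * J₁) := by
    have := div_pos (mul_pos hp₁pos hz₁s) (mul_pos hs hJ₁pos)
    linarith
  -- the minimizer
  set ustar : ℝ := (J₁ / p₁) ^ ((σ - 1)⁻¹ : ℝ) with hustar
  have hustar_pos : 0 < ustar := Real.rpow_pos_of_pos (div_pos hJ₁pos hp₁pos) _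
  have hustar_pow : ustar ^ (σ - 1) = J₁ / p₁ := by
    rw [hustar, ← Real.rpow_mul (div_pos hJ₁pos hp₁pos).le,
      inv_mul_cancel₀ (ne_of_gt hs), Real.rpow_one]
  have hpu : p₁ * ustar ^ (σ - 1) = J₁ := by
    rw [hustar_pow]; field_simp
  have hz₁u : z₁ < ustar := by
    by_contra h
    push_neg at h
    have h1 : ustar ^ (σ - 1) ≤ z₁ ^ (σ - 1) :=
      Real.rpow_le_rpow hustar_pos.le h hs.le
    have h2 : J₁ ≤ p₁ * z₁ ^ (σ - 1) := by
      rw [← hpu]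
      exact mul_le_mul_of_nonneg_left h1 hp₁pos.le
    linarith
  -- derivative of M₃
  have hM₃fun : M₃ = fun u => (E₁ * p u + E₁ * p₁ * (1 - J u / J₁)
      + E₁ * p₁ ^ 2 * z₁ ^ (σ - 1) / ((σ - 1) * J₁)) /
      (1 + p₁ * z₁ ^ (σ - 1) / ((σ - 1) * J₁)) := funext hM₃
  have hMder : ∀ x : ℝ, 0 < x → HasDerivAt M₃
      (E₁ * μ x * (p₁ * x ^ (σ - 1) - J₁)
        / (J₁ * (1 + p₁ * z₁ ^ (σ - 1) / ((σ - 1) * J₁)))) x := by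
    intro x hx
    have h1 := pder' x hx
    have h2 := Jder' x hx
    have h3 : HasDerivAt (fun u => E₁ * p u + E₁ * p₁ * (1 - J u / J₁)
        + E₁ * p₁ ^ 2 * z₁ ^ (σ - 1) / ((σ - 1) * J₁))
        (E₁ * -(μ x) + E₁ * p₁ * -(-(x ^ (σ - 1) * μ x) / J₁)) x := by
      have := ((h1.const_mul E₁).add
        (((h2.div_const J₁).const_sub 1).const_mul (E₁ * p₁))).add_const
        (E₁ * p₁ ^ 2 * z₁ ^ (σ - 1) / ((σ - 1) * J₁))
      convert this using 1
      all_goals rfl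
    have h4 := h3.div_const (1 + p₁ * z₁ ^ (σ - 1) / ((σ - 1) * J₁))
    rw [hM₃fun]
    convert h4 using 1
    any_goals rfl
    have hJne := hJ₁pos.ne'
    have hDne := hDpos.ne'
    field_simp
    ring
  -- smoothness
  have hsub : Set.Ici z₁ ⊆ Set.Ioi 0 := fun x hx => lt_of_lt_of_le hz₁ hx
  have hcdM : ContDiffOn ℝ 1 M₃ (Set.Ici z₁) := by
    rw [hM₃fun]
    exact (((contDiffOn_const.mul (pcd'.mono hsub)).add
      (contDiffOn_const.mul (contDiffOn_const.sub
        ((Jcd'.mono hsub).div_const _)))).add contDiffOn_const).div_const _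
  have hcont : ContinuousOn M₃ (Set.Ici z₁) := hcdM.continuousOn
  -- monotonicity
  have hanti : StrictAntiOn M₃ (Set.Icc z₁ ustar) := by
    refine strictAntiOn_of_deriv_neg (convex_Icc _ _)
      (hcont.mono (fun x hx => hx.1)) ?_
    intro x hx
    rw [interior_Icc] at hx
    have hx0 : 0 < x := lt_trans hz₁ hx.1
    rw [(hMder x hx0).deriv]
    have hμx : 0 < μ x := hμpos x (le_of_lt hx.1)
    have hlt : p₁ * x ^ (σ - 1) < J₁ := by
      rw [← hpu]
      exact mul_lt_mul_of_pos_left (Real.rpow_lt_rpow hx0.le hx.2 hs) hp₁pos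
    exact div_neg_of_neg_of_pos
      (mul_neg_of_pos_of_neg (mul_pos hE₁ hμx) (by linarith))
      (mul_pos hJ₁pos hDpos)
  have hmono : StrictMonoOn M₃ (Set.Ici ustar) := by
    refine strictMonoOn_of_deriv_pos (convex_Ici _)
      (hcont.mono (fun x hx => le_trans hz₁u.le hx)) ?_
    intro x hx
    rw [interior_Ici] at hx
    have hx0 : 0 < x := lt_trans hustar_pos hx
    rw [(hMder x hx0).deriv]
    have hμx : 0 < μ x := hμpos x (le_of_lt (lt_of_le_of_lt hz₁u.le hx))
    have hlt : J₁ < p₁ * x ^ (σ - 1) := by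
      rw [← hpu]
      exact mul_lt_mul_of_pos_left (Real.rpow_lt_rpow hustar_pos.le hx hs) hp₁pos
    exact div_pos (mul_pos (mul_pos hE₁ hμx) (by linarith))
      (mul_pos hJ₁pos hDpos)
  -- value at z₁
  have heq1 : M₃ z₁ = M₁ := by
    rw [hM₃ z₁, ← hp₁, ← hJ₁, hM₁]
    field_simp
    ring
  -- limit at infinity
  have htend : Filter.Tendsto M₃ Filter.atTop (nhds M₁) := by
    rw [hM₃fun]
    have h := (((ptend'.const_mul E₁).add
      (((Jtend'.div_const J₁).const_sub 1).const_mul (E₁ * p₁))).add_const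
      (E₁ * p₁ ^ 2 * z₁ ^ (σ - 1) / ((σ - 1) * J₁))).div_const
      (1 + p₁ * z₁ ^ (σ - 1) / ((σ - 1) * J₁))
    convert h using 2
    rw [hM₁]
    field_simp
    ring
  -- strictly below M₁ for u > z₁
  have hlt : ∀ u : ℝ, z₁ < u → M₃ u < M₁ := by
    intro u hu
    rcases le_or_gt u ustar with h | h
    · calc M₃ u < M₃ z₁ := hanti ⟨le_rfl, hz₁u.le⟩ ⟨hu.le, h⟩ hu
        _ = M₁ := heq1
    · have h1 : M₃ u < M₃ (u + 1) :=
        hmono (le_of_lt h) (by simp only [Set.mem_Ici]; linarith) (by linarith)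
      have h2 : M₃ (u + 1) ≤ M₁ := by
        refine ge_of_tendsto htend ?_
        filter_upwards [Filter.eventually_ge_atTop (u + 1)] with w hw
        rcases eq_or_lt_of_le hw with h' | h'
        · rw [← h']
        · exact (hmono (by simp only [Set.mem_Ici]; linarith)
            (by simp only [Set.mem_Ici]; linarith) h').le
      linarith
  -- global minimum
  have hmin : ∀ u ∈ Set.Ici z₁, M₃ ustar ≤ M₃ u := by
    intro u hu
    rcases lt_trichotomy u ustar with h | h | h
    · exact (hanti ⟨hu, h.le⟩ ⟨hz₁u.le, le_rfl⟩ h).le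
    · rw [h]
    · exact (hmono Set.self_mem_Ici h.le h).le
  have huniq : ∀ v ∈ Set.Ici z₁, (∀ u ∈ Set.Ici z₁, M₃ v ≤ M₃ u) → v = ustar := by
    intro v hv hvmin
    by_contra hne
    have h2 : M₃ v ≤ M₃ ustar := hvmin ustar hz₁u.le
    rcases lt_or_gt_of_ne hne with h | h
    · have h1 : M₃ ustar < M₃ v := hanti ⟨hv, h.le⟩ ⟨hz₁u.le, le_rfl⟩ h
      linarith
    · have h1 : M₃ ustar < M₃ v := hmono Set.self_mem_Ici h.le h
      linarith
  -- repeated values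
  have hrep : ∀ u : ℝ, z₁ < u → u < ustar → ∃ u' : ℝ, ustar < u' ∧ M₃ u = M₃ u' := by
    intro u hu hus
    have h1 : M₃ ustar < M₃ u := hanti ⟨hu.le, hus.le⟩ ⟨hz₁u.le, le_rfl⟩ hus
    have h2 : M₃ u < M₁ := hlt u hu
    obtain ⟨T, hT1, hT2⟩ : ∃ T : ℝ, ustar < T ∧ M₃ u < M₃ T := by
      have he := (htend.eventually (eventually_gt_nhds h2)).and
        (Filter.eventually_gt_atTop ustar)
      obtain ⟨T, hA, hB⟩ := he.exists
      exact ⟨T, hB, hA⟩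
    have hc : ContinuousOn M₃ (Set.Icc ustar T) :=
      hcont.mono (fun x hx => le_trans hz₁u.le hx.1)
    have hmem : M₃ u ∈ Set.Icc (M₃ ustar) (M₃ T) := ⟨h1.le, hT2.le⟩
    obtain ⟨u', hu', hval⟩ := intermediate_value_Icc hT1.le hc hmem
    refine ⟨u', ?_, hval.symm⟩
    rcases eq_or_lt_of_le hu'.1 with h' | h'
    · exact absurd hval (by rw [← h']; exact ne_of_lt h1)
    · exact h'
  exact ⟨heq1, htend, hlt, hcdM, ustar, hz₁u, hanti, hmono, hmin, huniq, hrep⟩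
end

section
/- Let c ∈ (0,1) and define g(s) = (1 − e^{−c s})/(1 − e^{−s}) for s > 0. Then: (i) g is strictly increasing on (0,∞); (ii) g(s) < 1 for all s > 0; (iii) lim_{s→0⁺} g(s) = c. Consequently, for any φ > 1 and any K > 0, the sequence M_T := K ( φ^{−1} + (1 − φ^{−1}) · (1 − φ^{−c/T})/(1 − φ^{−1/T}) ), T = 1, 2, …, satisfies M_T < K for every T, is strictly decreasing in T, and converges to M_∞ := K ( φ^{−1} + (1 − φ^{−1}) c ) as T → ∞. -/
section Stmt13Aux

-- key convexity inequality
private lemma stmt13_key1 (c s : ℝ) (hc0 : 0 < c) (hc1 : c < 1) (hs : 0 < s) :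
    1 < c * Real.exp ((1 - c) * s) + (1 - c) * Real.exp (-(c * s)) := by
  have h := strictConvexOn_exp.2 (Set.mem_univ ((1 - c) * s)) (Set.mem_univ (-(c * s)))
    (show ((1-c)*s : ℝ) ≠ -(c*s) by intro h; nlinarith) hc0
    (show (0:ℝ) < 1 - c by linarith) (by ring)
  simp only [smul_eq_mul] at h
  have : c * ((1 - c) * s) + (1 - c) * -(c * s) = 0 := by ring
  rw [this, Real.exp_zero] at h
  exact h

-- positivity of derivative numerator
private lemma stmt13_key2 (c s : ℝ) (hc0 : 0 < c) (hc1 : c < 1) (hs : 0 < s) :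
    0 < c * Real.exp (-(c * s)) * (1 - Real.exp (-s)) -
      (1 - Real.exp (-(c * s))) * Real.exp (-s) := by
  have h := stmt13_key1 c s hc0 hc1 hs
  have hes : 0 < Real.exp (-s) := Real.exp_pos _
  have hmul : Real.exp (-s) * Real.exp ((1 - c) * s) = Real.exp (-(c * s)) := by
    rw [← Real.exp_add]; ring_nf
  nlinarith [mul_lt_mul_of_pos_left h hes]

private lemma stmt13_hasDerivAt_num (c s : ℝ) :
    HasDerivAt (fun s : ℝ => 1 - Real.exp (-(c * s))) (c * Real.exp (-(c * s))) s := by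
  have h : HasDerivAt (fun s : ℝ => -(c * s)) (-c) s := by
    exact (((hasDerivAt_id s).const_mul c).congr_deriv (mul_one c)).neg
  have := (h.exp).const_sub 1
  exact this.congr_deriv (by ring)

private lemma stmt13_hasDerivAt_den (s : ℝ) :
    HasDerivAt (fun s : ℝ => 1 - Real.exp (-s)) (Real.exp (-s)) s := by
  have := ((hasDerivAt_id s).neg.exp).const_sub 1
  simpa using this

private lemma stmt13_den_pos {s : ℝ} (hs : 0 < s) : 0 < 1 - Real.exp (-s) := by
  have : Real.exp (-s) < 1 := Real.exp_lt_one_iff.mpr (by linarith)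
  linarith

private lemma stmt13_hasDerivAt_g (c : ℝ) {s : ℝ} (hs : 0 < s) :
    HasDerivAt (fun s : ℝ => (1 - Real.exp (-(c * s))) / (1 - Real.exp (-s)))
      ((c * Real.exp (-(c * s)) * (1 - Real.exp (-s)) -
        (1 - Real.exp (-(c * s))) * Real.exp (-s)) / (1 - Real.exp (-s)) ^ 2) s :=
  (stmt13_hasDerivAt_num c s).div (stmt13_hasDerivAt_den s) (ne_of_gt (stmt13_den_pos hs))

private lemma stmt13_g_mono (c : ℝ) (hc0 : 0 < c) (hc1 : c < 1) :
    StrictMonoOn (fun s : ℝ => (1 - Real.exp (-(c * s))) / (1 - Real.exp (-s)))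
      (Set.Ioi 0) := by
  apply strictMonoOn_of_deriv_pos (convex_Ioi 0)
  · intro s hs
    exact ((stmt13_hasDerivAt_g c hs).continuousAt).continuousWithinAt
  · intro s hs
    rw [interior_Ioi] at hs
    rw [(stmt13_hasDerivAt_g c hs).deriv]
    exact div_pos (stmt13_key2 c s hc0 hc1 hs) (pow_pos (stmt13_den_pos hs) 2)

private lemma stmt13_g_lt_one (c : ℝ) (hc0 : 0 < c) (hc1 : c < 1) {s : ℝ} (hs : 0 < s) :
    (1 - Real.exp (-(c * s))) / (1 - Real.exp (-s)) < 1 := by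
  rw [div_lt_one (stmt13_den_pos hs)]
  have : Real.exp (-s) < Real.exp (-(c * s)) := Real.exp_lt_exp.mpr (by nlinarith)
  linarith

private lemma stmt13_g_lim (c : ℝ) (hc0 : 0 < c) (hc1 : c < 1) :
    Filter.Tendsto (fun s : ℝ => (1 - Real.exp (-(c * s))) / (1 - Real.exp (-s)))
      (nhdsWithin 0 (Set.Ioi 0)) (nhds c) := by
  have hnum : Filter.Tendsto (fun s : ℝ => (1 - Real.exp (-(c * s))) / s)
      (nhdsWithin 0 (Set.Ioi 0)) (nhds c) := by
    have h := hasDerivAt_iff_tendsto_slope.mp (stmt13_hasDerivAt_num c 0)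
    have h2 := h.mono_left (nhdsWithin_mono 0 (by
      intro x hx
      exact ne_of_gt (Set.mem_Ioi.mp hx)))
    simp only [mul_zero, neg_zero, Real.exp_zero, mul_one] at h2
    refine h2.congr' ?_
    filter_upwards [self_mem_nhdsWithin] with s hs
    simp [slope_def_field]
  have hden : Filter.Tendsto (fun s : ℝ => (1 - Real.exp (-s)) / s)
      (nhdsWithin 0 (Set.Ioi 0)) (nhds 1) := by
    have h := hasDerivAt_iff_tendsto_slope.mp (stmt13_hasDerivAt_den 0)
    have h2 := h.mono_left (nhdsWithin_mono 0 (by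
      intro x hx
      exact ne_of_gt (Set.mem_Ioi.mp hx)))
    simp only [neg_zero, Real.exp_zero] at h2
    refine h2.congr' ?_
    filter_upwards [self_mem_nhdsWithin] with s hs
    simp [slope_def_field]
  have := hnum.div hden one_ne_zero
  rw [div_one] at this
  refine this.congr' ?_
  filter_upwards [self_mem_nhdsWithin] with s hs
  have hs' : (s : ℝ) ≠ 0 := ne_of_gt hs
  simp only [Pi.div_apply]; field_simp

private lemma stmt13_rpow_eq_exp {φ : ℝ} (hφ : 1 < φ) (x : ℝ) :
    φ ^ (-(x)) = Real.exp (-(x * Real.log φ)) := by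
  rw [Real.rpow_def_of_pos (by linarith : (0:ℝ) < φ)]
  ring_nf

end Stmt13Aux

/-- `g(s) = (1 − e^{−cs})/(1 − e^{−s})` is strictly increasing on
`(0,∞)`, bounded above by `1`, with limit `c` as `s → 0⁺`; consequently the
long-run firm mass `M_T` is below `K` for all reversion speeds, strictly
decreases in `T`, and converges to `K (φ⁻¹ + (1 − φ⁻¹) c)`. -/
theorem stmt13 (c : ℝ) (hc0 : 0 < c) (hc1 : c < 1) :
    StrictMonoOn (fun s : ℝ => (1 - Real.exp (-(c * s))) / (1 - Real.exp (-s)))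
      (Set.Ioi 0) ∧
    (∀ s : ℝ, 0 < s → (1 - Real.exp (-(c * s))) / (1 - Real.exp (-s)) < 1) ∧
    Filter.Tendsto (fun s : ℝ => (1 - Real.exp (-(c * s))) / (1 - Real.exp (-s)))
      (nhdsWithin 0 (Set.Ioi 0)) (nhds c) ∧
    (∀ φ K : ℝ, 1 < φ → 0 < K →
      (∀ T : ℕ, 1 ≤ T →
        K * (φ ^ (-(1:ℝ)) + (1 - φ ^ (-(1:ℝ))) *
          (1 - φ ^ (-(c / (T:ℝ)))) / (1 - φ ^ (-(1 / (T:ℝ))))) < K) ∧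
      (∀ T : ℕ, 1 ≤ T →
        K * (φ ^ (-(1:ℝ)) + (1 - φ ^ (-(1:ℝ))) *
          (1 - φ ^ (-(c / ((T:ℝ) + 1)))) / (1 - φ ^ (-(1 / ((T:ℝ) + 1))))) <
        K * (φ ^ (-(1:ℝ)) + (1 - φ ^ (-(1:ℝ))) *
          (1 - φ ^ (-(c / (T:ℝ)))) / (1 - φ ^ (-(1 / (T:ℝ)))))) ∧
      Filter.Tendsto (fun T : ℕ =>
          K * (φ ^ (-(1:ℝ)) + (1 - φ ^ (-(1:ℝ))) *
            (1 - φ ^ (-(c / (T:ℝ)))) / (1 - φ ^ (-(1 / (T:ℝ))))))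
        Filter.atTop (nhds (K * (φ ^ (-(1:ℝ)) + (1 - φ ^ (-(1:ℝ))) * c)))) := by
  refine ⟨stmt13_g_mono c hc0 hc1, fun s hs => stmt13_g_lt_one c hc0 hc1 hs,
    stmt13_g_lim c hc0 hc1, fun φ K hφ hK => ⟨?_, ?_, ?_⟩⟩
  · -- M_T < K
    intro T hT
    have hlog : 0 < Real.log φ := Real.log_pos hφ
    have hTpos : (0:ℝ) < T := by exact_mod_cast hT
    set s := Real.log φ / T with hsdef
    have hs : 0 < s := div_pos hlog hTpos
    have h1 : φ ^ (-(c / (T:ℝ))) = Real.exp (-(c * s)) := by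
      rw [stmt13_rpow_eq_exp hφ, hsdef]; ring_nf
    have h2 : φ ^ (-(1 / (T:ℝ))) = Real.exp (-s) := by
      rw [stmt13_rpow_eq_exp hφ, hsdef]; ring_nf
    have hinv : φ ^ (-(1:ℝ)) < 1 := Real.rpow_lt_one_of_one_lt_of_neg hφ (by norm_num)
    have hg := stmt13_g_lt_one c hc0 hc1 hs
    rw [h1, h2]
    have hB : 0 < 1 - φ ^ (-(1:ℝ)) := by linarith
    calc K * (φ ^ (-(1:ℝ)) + (1 - φ ^ (-(1:ℝ))) *
        (1 - Real.exp (-(c * s))) / (1 - Real.exp (-s)))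
        = K * (φ ^ (-(1:ℝ)) + (1 - φ ^ (-(1:ℝ))) *
          ((1 - Real.exp (-(c * s))) / (1 - Real.exp (-s)))) := by ring
      _ < K * (φ ^ (-(1:ℝ)) + (1 - φ ^ (-(1:ℝ))) * 1) := by
          apply mul_lt_mul_of_pos_left _ hK
          apply add_lt_add_right
          exact mul_lt_mul_of_pos_left hg hB
      _ = K * 1 := by ring_nf
      _ = K := mul_one K
  · -- strictly decreasing
    intro T hT
    have hlog : 0 < Real.log φ := Real.log_pos hφ
    have hTpos : (0:ℝ) < T := by exact_mod_cast hT
    have hT1pos : (0:ℝ) < (T:ℝ) + 1 := by linarith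
    set s := Real.log φ / T with hsdef
    set s' := Real.log φ / ((T:ℝ) + 1) with hs'def
    have hs : 0 < s := div_pos hlog hTpos
    have hs' : 0 < s' := div_pos hlog hT1pos
    have hlt : s' < s := by
      apply div_lt_div_of_pos_left hlog hTpos
      linarith
    have h1 : φ ^ (-(c / (T:ℝ))) = Real.exp (-(c * s)) := by
      rw [stmt13_rpow_eq_exp hφ, hsdef]; ring_nf
    have h2 : φ ^ (-(1 / (T:ℝ))) = Real.exp (-s) := by
      rw [stmt13_rpow_eq_exp hφ, hsdef]; ring_nf
    have h1' : φ ^ (-(c / ((T:ℝ) + 1))) = Real.exp (-(c * s')) := by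
      rw [stmt13_rpow_eq_exp hφ, hs'def]; ring_nf
    have h2' : φ ^ (-(1 / ((T:ℝ) + 1))) = Real.exp (-s') := by
      rw [stmt13_rpow_eq_exp hφ, hs'def]; ring_nf
    have hinv : φ ^ (-(1:ℝ)) < 1 := Real.rpow_lt_one_of_one_lt_of_neg hφ (by norm_num)
    have hB : 0 < 1 - φ ^ (-(1:ℝ)) := by linarith
    have hg := stmt13_g_mono c hc0 hc1 (Set.mem_Ioi.mpr hs') (Set.mem_Ioi.mpr hs) hlt
    simp only at hg
    rw [h1, h2, h1', h2']
    rw [mul_div_assoc, mul_div_assoc]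
    apply mul_lt_mul_of_pos_left _ hK
    apply add_lt_add_right
    exact mul_lt_mul_of_pos_left hg hB
  · -- convergence
    have hlog : 0 < Real.log φ := Real.log_pos hφ
    have hsT : Filter.Tendsto (fun T : ℕ => Real.log φ / T) Filter.atTop
        (nhdsWithin 0 (Set.Ioi 0)) := by
      rw [tendsto_nhdsWithin_iff]
      constructor
      · exact tendsto_const_div_atTop_nhds_zero_nat _
      · filter_upwards [Filter.eventually_ge_atTop 1] with T hT
        have : (0:ℝ) < T := by exact_mod_cast hT
        exact Set.mem_Ioi.mpr (div_pos hlog this)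
    have hgl := (stmt13_g_lim c hc0 hc1).comp hsT
    have htend : Filter.Tendsto (fun T : ℕ =>
        K * (φ ^ (-(1:ℝ)) + (1 - φ ^ (-(1:ℝ))) *
          ((1 - Real.exp (-(c * (Real.log φ / T)))) /
            (1 - Real.exp (-(Real.log φ / T))))))
        Filter.atTop (nhds (K * (φ ^ (-(1:ℝ)) + (1 - φ ^ (-(1:ℝ))) * c))) :=
      (((hgl.const_mul (1 - φ ^ (-(1:ℝ)))).const_add (φ ^ (-(1:ℝ)))).const_mul K)
    refine htend.congr' ?_
    filter_upwards [Filter.eventually_ge_atTop 1] with T hT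
    have hTpos : (0:ℝ) < T := by exact_mod_cast hT
    have h1 : φ ^ (-(c / (T:ℝ))) = Real.exp (-(c * (Real.log φ / T))) := by
      rw [stmt13_rpow_eq_exp hφ]; ring_nf
    have h2 : φ ^ (-(1 / (T:ℝ))) = Real.exp (-(Real.log φ / T)) := by
      rw [stmt13_rpow_eq_exp hφ]; ring_nf
    rw [h1, h2, mul_div_assoc]
end

section
/- Let α ∈ [0,1], σ > 1 and q ∈ ℝ with α q ≠ 1. (i) Define β := 1 − q/(α q − 1). If α(1 − β) ≠ 1, then q = (1 − β)/(α(1 − β) − 1), and the bias of the naive estimate q̂ := β − 1 is q̂ − q = −α(1 − β)²/(α(1 − β) − 1). (ii) Define β̃ := 1 − 1/((σ−1)(α q − 1)). If α > 0 and β̃ ≠ 1, then q = (1/α) ( 1 + 1/((σ−1)(1 − β̃)) ), and the bias of q̃̂ := β̃ − 1 is q̃̂ − q = ( α(σ−1)(β̃−1)² − (σ−1)(β̃−1) + 1 ) / ( α(σ−1)(β̃−1) ). -/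
/-- Remark 3, Mismeasurement in Price Indices: inversion of the
regression coefficients and biases of the naive love-of-variety estimates,
(i) with variety-adjusted deflators (`β = 1 − q/(αq−1)`), and
(ii) with deflators omitting the variety effect
(`β̃ = 1 − 1/((σ−1)(αq−1))`). -/
theorem stmt18 (α σ q : ℝ) (hα0 : 0 ≤ α) (hα1 : α ≤ 1) (hσ : 1 < σ)
    (hαq : α * q ≠ 1) :
    (∀ b : ℝ, b = 1 - q / (α * q - 1) → α * (1 - b) ≠ 1 →
      q = (1 - b) / (α * (1 - b) - 1) ∧
      (b - 1) - q = -(α * (1 - b) ^ 2) / (α * (1 - b) - 1)) ∧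
    (∀ bt : ℝ, bt = 1 - 1 / ((σ - 1) * (α * q - 1)) → 0 < α → bt ≠ 1 →
      q = (1 / α) * (1 + 1 / ((σ - 1) * (1 - bt))) ∧
      (bt - 1) - q =
        (α * (σ - 1) * (bt - 1) ^ 2 - (σ - 1) * (bt - 1) + 1) /
          (α * (σ - 1) * (bt - 1))) := by
  have hden : α * q - 1 ≠ 0 := sub_ne_zero.mpr hαq
  have hσ1 : σ - 1 ≠ 0 := sub_ne_zero.mpr (ne_of_gt hσ)
  constructor
  · intro b hb hb1
    subst hb
    have h1 : α * (1 - (1 - q / (α * q - 1))) - 1 = 1 / (α * q - 1) := by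
      field_simp
      ring
    rw [h1]
    constructor
    · rw [one_div, div_inv_eq_mul]
      linear_combination -(div_mul_cancel₀ q hden)
    · rw [one_div, div_inv_eq_mul]
      linear_combination (1 + α * (q / (α * q - 1))) * (div_mul_cancel₀ q hden)
  · intro bt hbt hα hbt1
    subst hbt
    have h2 : (σ - 1) * (α * q - 1) ≠ 0 := mul_ne_zero hσ1 hden
    have h3 : (1 : ℝ) - (1 - 1 / ((σ - 1) * (α * q - 1))) ≠ 0 := by
      intro h; apply hbt1; linarith
    have hαne : α ≠ 0 := ne_of_gt hα
    constructor
    · rw [sub_sub_cancel]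
      field_simp
      ring
    · have h4 : α * (σ - 1) * ((1 - 1 / ((σ - 1) * (α * q - 1))) - 1) ≠ 0 := by
        field_simp
        rw [sub_sub_cancel_left]
        exact div_ne_zero (mul_ne_zero hαne (by norm_num)) hden
      rw [eq_div_iff h4]
      field_simp
      ring
end

section
/- Let σ > 1, q > 0, M₀ > 0, f > 0, L̄ > 0, and let μ be a continuous probability density on (0,∞), strictly positive on an interval containing the relevant region, with p(u) = ∫_u^∞ μ(z) dz and J(u) = ∫_u^∞ z^{σ−1} μ(z) dz finite. On the open set of u where p(u) > 0, J(u) > 0 and L̄ − f M₀ p(u) > 0, define the planner's exit-only objective Y(u) = M₀^q · p(u)^{q − 1/(σ−1)} · ( L̄ − f M₀ p(u) ) · ( M₀ J(u) )^{1/(σ−1)}. Then: (i) Y is differentiable and Y′(u) = 0 if and only if f M₀ p(u) = ( (L̄ − f M₀ p(u))/(σ−1) ) · ( (q(σ−1) − 1) + u^{σ−1} p(u)/J(u) ); (ii) a point u satisfying this first-order condition additionally satisfies the market zero-profit condition f = ( (L̄ − f M₀ p(u))/(σ−1) ) · u^{σ−1}/(M₀ J(u)) if and only if q = 1/(σ−1).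 Hence in the exit state the market allocation is a critical point of the planner's objective exactly under CES love-of-variety. -/
open MeasureTheory

lemma tail_hasDerivAt (g : ℝ → ℝ) (hgc : ContinuousOn g (Set.Ioi 0))
    (hgi : IntegrableOn g (Set.Ioi 0)) (u : ℝ) (hu : 0 < u) :
    HasDerivAt (fun v => ∫ z in Set.Ioi v, g z) (-(g u)) u := by
  have hmem : Set.Ioi (0:ℝ) ∈ nhds u := Ioi_mem_nhds hu
  have hii : IntervalIntegrable g volume 0 u := by
    rw [intervalIntegrable_iff_integrableOn_Ioc_of_le hu.le]
    exact hgi.mono_set Set.Ioc_subset_Ioi_self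
  have hmeas : StronglyMeasurableAtFilter g (nhds u) :=
    ⟨Set.Ioi 0, hmem, hgc.aestronglyMeasurable measurableSet_Ioi⟩
  have hcont : ContinuousAt g u := hgc.continuousAt hmem
  have hF : HasDerivAt (fun v => (∫ z in Set.Ioi (0:ℝ), g z) - ∫ x in (0:ℝ)..v, g x)
      (-(g u)) u :=
    (intervalIntegral.integral_hasDerivAt_right hii hmeas hcont).const_sub _
  apply hF.congr_of_eventuallyEq
  filter_upwards [hmem] with v hv
  have hsplit : (∫ z in Set.Ioc (0:ℝ) v, g z) + ∫ z in Set.Ioi v, g z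
      = ∫ z in Set.Ioi (0:ℝ), g z := by
    rw [← MeasureTheory.setIntegral_union (Set.Ioc_disjoint_Ioi le_rfl) measurableSet_Ioi
      (hgi.mono_set Set.Ioc_subset_Ioi_self) (hgi.mono_set (Set.Ioi_subset_Ioi hv.le)),
      Set.Ioc_union_Ioi_eq_Ioi hv.le]
  rw [intervalIntegral.integral_of_le hv.le]
  linarith [hsplit]

/-- exit-only case of Proposition 6, Social Planner Allocation:
at a point `u` of the planner's feasible region (positive tail mass, positive
tail productivity, positive production labor, positive density), the planner's
exit-only objective `Y` is differentiable, its derivative vanishes exactly at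
the stated first-order condition, and a critical point additionally satisfies
the market zero-profit condition if and only if `q = 1/(σ−1)` (CES). -/
theorem stmt19 (σ q M₀ f L : ℝ) (hσ : 1 < σ) (hq : 0 < q) (hM₀ : 0 < M₀)
    (hf : 0 < f) (hL : 0 < L)
    (μ : ℝ → ℝ)
    (hμc : ContinuousOn μ (Set.Ioi 0))
    (hμnn : ∀ z ∈ Set.Ioi (0:ℝ), 0 ≤ μ z)
    (hμ_prob : ∫ z in Set.Ioi (0:ℝ), μ z = 1)
    (hμ_int : IntegrableOn μ (Set.Ioi 0))
    (hmom : IntegrableOn (fun z => z ^ (σ - 1) * μ z) (Set.Ioi 0))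
    (Y : ℝ → ℝ)
    (hY : ∀ v : ℝ, Y v =
      M₀ ^ q * (∫ z in Set.Ioi v, μ z) ^ (q - 1 / (σ - 1)) *
        (L - f * M₀ * ∫ z in Set.Ioi v, μ z) *
        (M₀ * ∫ z in Set.Ioi v, z ^ (σ - 1) * μ z) ^ (1 / (σ - 1)))
    (u : ℝ) (hu : 0 < u) (hμu : 0 < μ u)
    (hpu : 0 < ∫ z in Set.Ioi u, μ z)
    (hJu : 0 < ∫ z in Set.Ioi u, z ^ (σ - 1) * μ z)
    (hLu : 0 < L - f * M₀ * ∫ z in Set.Ioi u, μ z) :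
    (∃ Y' : ℝ, HasDerivAt Y Y' u ∧
      (Y' = 0 ↔
        f * M₀ * (∫ z in Set.Ioi u, μ z) =
          ((L - f * M₀ * ∫ z in Set.Ioi u, μ z) / (σ - 1)) *
            ((q * (σ - 1) - 1) +
              u ^ (σ - 1) * (∫ z in Set.Ioi u, μ z) /
                (∫ z in Set.Ioi u, z ^ (σ - 1) * μ z)))) ∧
    ((f * M₀ * (∫ z in Set.Ioi u, μ z) =
        ((L - f * M₀ * ∫ z in Set.Ioi u, μ z) / (σ - 1)) *
          ((q * (σ - 1) - 1) +
            u ^ (σ - 1) * (∫ z in Set.Ioi u, μ z) /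
              (∫ z in Set.Ioi u, z ^ (σ - 1) * μ z))) →
      ((f = ((L - f * M₀ * ∫ z in Set.Ioi u, μ z) / (σ - 1)) *
            u ^ (σ - 1) / (M₀ * ∫ z in Set.Ioi u, z ^ (σ - 1) * μ z)) ↔
        q = 1 / (σ - 1))) := by
  have hσ1 : (0:ℝ) < σ - 1 := by linarith
  set P : ℝ := ∫ z in Set.Ioi u, μ z with hPdef
  set J0 : ℝ := ∫ z in Set.Ioi u, z ^ (σ - 1) * μ z with hJ0def
  set m : ℝ := μ u with hmdef
  set Lp : ℝ := L - f * M₀ * P with hLpdef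
  have hupos : (0:ℝ) < u ^ (σ - 1) := Real.rpow_pos_of_pos hu _
  have hMJ : (0:ℝ) < M₀ * J0 := mul_pos hM₀ hJu
  -- derivatives of the tail integrals
  have hp : HasDerivAt (fun v => ∫ z in Set.Ioi v, μ z) (-m) u :=
    tail_hasDerivAt μ hμc hμ_int u hu
  have hgc : ContinuousOn (fun z => z ^ (σ - 1) * μ z) (Set.Ioi 0) := by
    apply ContinuousOn.mul _ hμc
    exact fun x hx => (Real.continuousAt_rpow_const x _ (Or.inl (ne_of_gt hx))).continuousWithinAt
  have hJ : HasDerivAt (fun v => ∫ z in Set.Ioi v, z ^ (σ - 1) * μ z)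
      (-(u ^ (σ - 1) * m)) u := tail_hasDerivAt _ hgc hmom u hu
  -- pieces
  have h1 : HasDerivAt (fun v => M₀ ^ q * (∫ z in Set.Ioi v, μ z) ^ (q - 1 / (σ - 1)))
      (M₀ ^ q * ((-m) * (q - 1 / (σ - 1)) * P ^ (q - 1 / (σ - 1) - 1))) u :=
    (hp.rpow_const (Or.inl hpu.ne')).const_mul _
  have h2 : HasDerivAt (fun v => L - f * M₀ * ∫ z in Set.Ioi v, μ z)
      (-(f * M₀ * (-m))) u := (hp.const_mul (f * M₀)).const_sub L
  have h3 : HasDerivAt (fun v => (M₀ * ∫ z in Set.Ioi v, z ^ (σ - 1) * μ z) ^ (1 / (σ - 1)))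
      ((M₀ * (-(u ^ (σ - 1) * m))) * (1 / (σ - 1)) * (M₀ * J0) ^ (1 / (σ - 1) - 1)) u :=
    (hJ.const_mul M₀).rpow_const (Or.inl hMJ.ne')
  have hD := (h1.mul h2).mul h3
  have hYeq : Y = fun v =>
      (M₀ ^ q * (∫ z in Set.Ioi v, μ z) ^ (q - 1 / (σ - 1)) *
        (L - f * M₀ * ∫ z in Set.Ioi v, μ z)) *
        (M₀ * ∫ z in Set.Ioi v, z ^ (σ - 1) * μ z) ^ (1 / (σ - 1)) := by
    funext v; rw [hY v]
  replace hD : HasDerivAt Y _ u :=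
    hD.congr_of_eventuallyEq (Filter.Eventually.of_forall fun v => by rw [hY v]; rfl)
  set D : ℝ := (M₀ ^ q * ((-m) * (q - 1 / (σ - 1)) * P ^ (q - 1 / (σ - 1) - 1)) * Lp +
      (M₀ ^ q * P ^ (q - 1 / (σ - 1))) * (-(f * M₀ * (-m)))) * (M₀ * J0) ^ (1 / (σ - 1)) +
      (M₀ ^ q * P ^ (q - 1 / (σ - 1)) * Lp) *
        ((M₀ * (-(u ^ (σ - 1) * m))) * (1 / (σ - 1)) * (M₀ * J0) ^ (1 / (σ - 1) - 1))
    with hDdef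
  -- rpow exponent arithmetic
  have hPa : P ^ (q - 1 / (σ - 1)) = P ^ (q - 1 / (σ - 1) - 1) * P := by
    rw [← Real.rpow_add_one hpu.ne' (q - 1 / (σ - 1) - 1)]; ring_nf
  have hMb : (M₀ * J0) ^ (1 / (σ - 1)) = (M₀ * J0) ^ (1 / (σ - 1) - 1) * (M₀ * J0) := by
    rw [← Real.rpow_add_one hMJ.ne' (1 / (σ - 1) - 1)]; ring_nf
  set K : ℝ := m * M₀ ^ q * P ^ (q - 1 / (σ - 1) - 1) * (M₀ * J0) ^ (1 / (σ - 1) - 1)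
    with hKdef
  have hKpos : 0 < K := by
    exact mul_pos (mul_pos (mul_pos hμu (Real.rpow_pos_of_pos hM₀ _))
      (Real.rpow_pos_of_pos hpu _)) (Real.rpow_pos_of_pos hMJ _)
  set B : ℝ := (q - 1 / (σ - 1)) * Lp * (M₀ * J0) - f * M₀ * P * (M₀ * J0) +
      (1 / (σ - 1)) * P * Lp * (M₀ * u ^ (σ - 1)) with hBdef
  have hDB : D = -K * B := by
    rw [hDdef, hKdef, hBdef, hPa, hMb]; ring
  -- canonical polynomial form of the FOC
  have hBval : B * (σ - 1) =
      M₀ * (Lp * ((q * (σ - 1) - 1) * J0 + u ^ (σ - 1) * P)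
        - f * M₀ * P * ((σ - 1) * J0)) := by
    rw [hBdef]; field_simp; try ring
  have hE_iff : (f * M₀ * P =
      (Lp / (σ - 1)) * ((q * (σ - 1) - 1) + u ^ (σ - 1) * P / J0)) ↔
      f * M₀ * P * ((σ - 1) * J0)
        = Lp * ((q * (σ - 1) - 1) * J0 + u ^ (σ - 1) * P) := by
    constructor
    · intro h; rw [h]; field_simp; try ring
    · intro h
      have h2 : f * M₀ * P
          = Lp * ((q * (σ - 1) - 1) * J0 + u ^ (σ - 1) * P) / ((σ - 1) * J0) := by
        rw [eq_div_iff (mul_pos hσ1 hJu).ne']; exact h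
      rw [h2]; field_simp; try ring
  have hB_iff : B = 0 ↔
      f * M₀ * P * ((σ - 1) * J0)
        = Lp * ((q * (σ - 1) - 1) * J0 + u ^ (σ - 1) * P) := by
    constructor
    · intro h
      have h2 : M₀ * (Lp * ((q * (σ - 1) - 1) * J0 + u ^ (σ - 1) * P)
          - f * M₀ * P * ((σ - 1) * J0)) = 0 := by rw [← hBval, h, zero_mul]
      have h3 := (mul_eq_zero.mp h2).resolve_left hM₀.ne'
      linarith [h3]
    · intro h
      have h2 : B * (σ - 1) = 0 := by rw [hBval, ← h]; ring
      exact (mul_eq_zero.mp h2).resolve_right hσ1.ne'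
  refine ⟨⟨D, hD, ?_⟩, ?_⟩
  · rw [hDB, neg_mul, neg_eq_zero, mul_eq_zero, hE_iff, ← hB_iff]
    constructor
    · rintro (h | h)
      · exact absurd h hKpos.ne'
      · exact h
    · exact Or.inr
  · -- part (ii)
    intro hFOC
    have hE := hE_iff.mp hFOC
    have hM_iff : (f = (Lp / (σ - 1)) * u ^ (σ - 1) / (M₀ * J0)) ↔
        f * ((σ - 1) * (M₀ * J0)) = Lp * u ^ (σ - 1) := by
      constructor
      · intro h; rw [h]; field_simp; try ring
      · intro h
        have h2 : f = Lp * u ^ (σ - 1) / ((σ - 1) * (M₀ * J0)) := by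
          rw [eq_div_iff (mul_pos hσ1 hMJ).ne']; exact h
        rw [h2]; field_simp; try ring
    rw [hM_iff]
    constructor
    · intro h
      have h4 : Lp * ((q * (σ - 1) - 1) * J0) = 0 := by linear_combination P * h - hE
      have h5 := (mul_eq_zero.mp h4).resolve_left hLu.ne'
      have h6 := (mul_eq_zero.mp h5).resolve_right hJu.ne'
      rw [eq_div_iff hσ1.ne']; linarith
    · intro hq1
      have h6 : q * (σ - 1) - 1 = 0 := by
        rw [hq1]; field_simp; ring
      have h7 : f * ((σ - 1) * (M₀ * J0)) * P = Lp * u ^ (σ - 1) * P := by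
        linear_combination hE + Lp * J0 * h6
      exact mul_right_cancel₀ hpu.ne' h7
end
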